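/- arXiv:1109.1150 — 10 statements merged into one kernel-verified Lean document; each statement's English description precedes it below -/
import Mathlib

section
/- If G is a graph on n ≥ 2 vertices, then the fair domination number of G plus the out-regular number of G equals n. -/
/-- `D` is a `k`-fair dominating set of `G`: a dominating set such that every
vertex outside `D` has exactly `k` neighbors in `D`. -/
def IsKFDSet {V : Type*} (G : SimpleGraph V) (k : ℕ) (D : Set V) : Prop :=
  (∀ v ∉ D, ∃ u ∈ D, G.Adj u v) ∧ ∀ v ∉ D, (G.neighborSet v ∩ D).ncard = k

/-- `D` is a fair dominating set of `G`: a `k`-fair dominating set for some `k ≥ 1`. -/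
def IsFDSet {V : Type*} (G : SimpleGraph V) (D : Set V) : Prop :=
  ∃ k ≥ 1, IsKFDSet G k D

/-- The fair domination number of `G`. -/
noncomputable def fd {V : Type*} (G : SimpleGraph V) : ℕ :=
  sInf {m | ∃ D : Set V, IsFDSet G D ∧ D.ncard = m}

/-- The 1-fair domination number of `G`. -/
noncomputable def fd1 {V : Type*} (G : SimpleGraph V) : ℕ :=
  sInf {m | ∃ D : Set V, IsKFDSet G 1 D ∧ D.ncard = m}

/-- `Q` is an out-regular set: all its vertices have the same positive number of
neighbors outside `Q`. -/
def IsORSet {V : Type*} (G : SimpleGraph V) (Q : Set V) : Prop :=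
  ∃ k ≥ 1, ∀ u ∈ Q, (G.neighborSet u \ Q).ncard = k

/-- The out-regular number of `G`. -/
noncomputable def outr {V : Type*} (G : SimpleGraph V) : ℕ :=
  sSup {m | ∃ Q : Set V, IsORSet G Q ∧ Q.ncard = m}

/-- The domination number of `G`. -/
noncomputable def domNum {V : Type*} (G : SimpleGraph V) : ℕ :=
  sInf {m | ∃ D : Set V, (∀ v ∉ D, ∃ u ∈ D, G.Adj u v) ∧ D.ncard = m}

/-- The corona of a graph `H`: attach one new pendant leaf to each vertex of `H`. -/
def corona {α : Type*} (H : SimpleGraph α) : SimpleGraph (α ⊕ α) :=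
  SimpleGraph.fromRel (fun a b =>
    match a, b with
    | Sum.inl x, Sum.inl y => H.Adj x y
    | Sum.inl x, Sum.inr y => x = y
    | _, _ => False)

/-- `T` is (isomorphic to) the corona of a tree. -/
def IsCoronaOfTree {V : Type*} (T : SimpleGraph V) : Prop :=
  ∃ (α : Type) (_ : Fintype α) (H : SimpleGraph α), H.IsTree ∧ Nonempty (T ≃g corona H)

lemma compl_fd_of_or {V : Type*} [Fintype V] (G : SimpleGraph V) (Q : Set V)
    (h : IsORSet G Q) : IsFDSet G Qᶜ := by
  obtain ⟨k, hk, hQ⟩ := h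
  refine ⟨k, hk, ?_, ?_⟩
  · intro v hv
    simp only [Set.mem_compl_iff, not_not] at hv
    have hcard : (G.neighborSet v \ Q).ncard = k := hQ v hv
    have hne : (G.neighborSet v \ Q).Nonempty := by
      rw [Set.nonempty_iff_ne_empty]
      intro he
      rw [he, Set.ncard_empty] at hcard
      omega
    obtain ⟨u, hu1, hu2⟩ := hne
    exact ⟨u, hu2, (G.mem_neighborSet v u |>.mp hu1).symm⟩
  · intro v hv
    simp only [Set.mem_compl_iff, not_not] at hv
    rw [Set.inter_comm, ← Set.diff_eq_compl_inter] at *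
    exact hQ v hv

lemma compl_or_of_fd {V : Type*} [Fintype V] (G : SimpleGraph V) (D : Set V)
    (h : IsFDSet G D) : IsORSet G Dᶜ := by
  obtain ⟨k, hk, _, hc⟩ := h
  refine ⟨k, hk, fun u hu => ?_⟩
  rw [Set.diff_eq_compl_inter, compl_compl, Set.inter_comm]
  exact hc u hu

/-- If `G` is a graph on `n ≥ 2` vertices, then `fd(G) + outr(G) = n`. -/
theorem fd_add_outr_eq_card {V : Type*} [Fintype V] (G : SimpleGraph V) (n : ℕ)
    (hn : Fintype.card V = n) (h2 : 2 ≤ n) :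
    fd G + outr G = n := by
  classical
  set S := {m | ∃ D : Set V, IsFDSet G D ∧ D.ncard = m} with hS
  set T := {m | ∃ Q : Set V, IsORSet G Q ∧ Q.ncard = m} with hT
  have hncard : ∀ s : Set V, s.ncard + sᶜ.ncard = n := by
    intro s
    rw [Set.ncard_add_ncard_compl s s.toFinite sᶜ.toFinite, Nat.card_eq_fintype_card, hn]
  have hSne : S.Nonempty := by
    refine ⟨(Set.univ : Set V).ncard, Set.univ, ⟨1, le_refl 1, ?_, ?_⟩, rfl⟩ <;>
      intro v hv <;> simp at hv
  have hTbdd : BddAbove T := by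
    refine ⟨n, fun m hm => ?_⟩
    obtain ⟨Q, _, rfl⟩ := hm
    calc Q.ncard ≤ (Set.univ : Set V).ncard := Set.ncard_le_ncard (Set.subset_univ Q)
    _ = n := by rw [Set.ncard_univ, Nat.card_eq_fintype_card, hn]
  have hTne : T.Nonempty := ⟨0, ∅, ⟨1, le_refl 1, fun u hu => absurd hu (Set.notMem_empty u)⟩,
    Set.ncard_empty V⟩
  have hfdS : fd G = sInf S := rfl
  have houtrT : outr G = sSup T := rfl
  -- fd G ∈ S
  obtain ⟨D, hD, hDcard⟩ := Nat.sInf_mem hSne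
  -- outr G ∈ T
  obtain ⟨Q, hQ, hQcard⟩ := Nat.sSup_mem hTne hTbdd
  have h1 : n - fd G ≤ outr G := by
    refine le_csSup hTbdd ⟨Dᶜ, compl_or_of_fd G D hD, ?_⟩
    have := hncard D
    omega
  have h2 : fd G ≤ n - outr G := by
    refine csInf_le (OrderBot.bddBelow S) ⟨Qᶜ, compl_fd_of_or G Q hQ, ?_⟩
    have := hncard Q
    omega
  have hfd_le : fd G ≤ n := by
    have := hncard D
    omega
  have houtr_le : outr G ≤ n := by
    have := hncard Q
    omega
  omega
end

section
/- If G is a graph on n ≥ 3 vertices with minimum degree at least 1, then fd(G) ≤ n − 2. -/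
private lemma good_of {V : Type*} [Fintype V] (G : SimpleGraph V) {u v : V} (huv : u ≠ v)
    (hd : (G.neighborSet u).ncard = (G.neighborSet v).ncard)
    (h1 : 1 ≤ (G.neighborSet u).ncard)
    (h : ¬ G.Adj u v ∨ 2 ≤ (G.neighborSet u).ncard) :
    (G.neighborSet u \ {v}).ncard = (G.neighborSet v \ {u}).ncard ∧
      1 ≤ (G.neighborSet u \ {v}).ncard := by
  by_cases hA : G.Adj u v
  · have h2 : 2 ≤ (G.neighborSet u).ncard := h.resolve_left (by simp [hA])
    have hv : v ∈ G.neighborSet u := hA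
    have hu : u ∈ G.neighborSet v := hA.symm
    rw [Set.ncard_diff_singleton_of_mem hv, Set.ncard_diff_singleton_of_mem hu, ← hd]
    omega
  · have hv : v ∉ G.neighborSet u := hA
    have hu : u ∉ G.neighborSet v := fun h => hA h.symm
    rw [Set.diff_singleton_eq_self hv, Set.diff_singleton_eq_self hu]
    exact ⟨hd, h1⟩

private lemma good_pair {V : Type*} [Fintype V] (G : SimpleGraph V)
    (n : ℕ) (hn : Fintype.card V = n) (h3 : 3 ≤ n)
    (hmin : ∀ v : V, (G.neighborSet v).Nonempty) :
    ∃ u v : V, u ≠ v ∧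
      (G.neighborSet u \ {v}).ncard = (G.neighborSet v \ {u}).ncard ∧
      1 ≤ (G.neighborSet u \ {v}).ncard := by
  classical
  set d : V → ℕ := fun v => (G.neighborSet v).ncard with hdd
  have hd1 : ∀ v, 1 ≤ d v := fun v =>
    (Set.ncard_pos (Set.toFinite _)).mpr (hmin v)
  have hdle : ∀ v, d v ≤ n - 1 := by
    intro v
    show (G.neighborSet v).ncard ≤ n - 1
    have hsub : G.neighborSet v ⊆ {v}ᶜ := fun w hw => by
      simp only [Set.mem_compl_iff, Set.mem_singleton_iff]
      exact fun h => G.irrefl (h ▸ hw)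
    have h1 : ({v} : Set V).ncard + ({v}ᶜ : Set V).ncard = n := by
      rw [Set.ncard_add_ncard_compl, Nat.card_eq_fintype_card, hn]
    have h2 : ({v} : Set V).ncard = 1 := Set.ncard_singleton v
    have := Set.ncard_le_ncard hsub (Set.toFinite _)
    omega
  -- pigeonhole
  obtain ⟨u, -, v, -, huv, hdeq⟩ :=
    Finset.exists_ne_map_eq_of_card_lt_of_maps_to
      (s := (Finset.univ : Finset V)) (t := Finset.Icc 1 (n-1)) (f := d)
      (by
        rw [Finset.card_univ, hn, Nat.card_Icc]
        omega)
      (fun a _ => by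
        rw [Finset.mem_coe, Finset.mem_Icc]
        exact ⟨hd1 a, hdle a⟩)
  by_cases hA : G.Adj u v
  · by_cases h2 : 2 ≤ d u
    · exact ⟨u, v, huv, good_of G huv hdeq (hd1 u) (Or.inr h2)⟩
    -- d u = d v = 1; N u = {v}, N v = {u}
    have hdu1 : d u = 1 := by have := hd1 u; omega
    have hNu : G.neighborSet u = {v} := by
      obtain ⟨a, ha⟩ := Set.ncard_eq_one.mp hdu1
      have hv : v ∈ G.neighborSet u := hA
      rw [ha] at hv ⊢
      rw [hv]
    -- Every vertex outside {u,v} is not adjacent to u.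
    by_cases hB : ∃ a b : V, a ≠ b ∧ d a = d b ∧ ¬ G.Adj a b
    · obtain ⟨a, b, hab, hdab, hnadj⟩ := hB
      exact ⟨a, b, hab, good_of G hab hdab (hd1 a) (Or.inl hnadj)⟩
    push_neg at hB
    -- hB : ∀ a b, a ≠ b → d a = d b → G.Adj a b
    have hS : ∀ w : V, w ≠ u → w ≠ v → 2 ≤ d w := by
      intro w hwu hwv
      by_contra hlt
      have hw1 : d w = 1 := by have := hd1 w; omega
      have hadj : G.Adj w u := hB w u hwu (by rw [hw1, hdu1])
      have : w ∈ G.neighborSet u := hadj.symm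
      rw [hNu] at this
      exact hwv this
    by_cases hC : ∃ w1 w2 : V, w1 ≠ w2 ∧ w1 ≠ u ∧ w1 ≠ v ∧ w2 ≠ u ∧ w2 ≠ v ∧ d w1 = d w2
    · obtain ⟨w1, w2, h12, h1u, h1v, h2u, h2v, hdw⟩ := hC
      exact ⟨w1, w2, h12, good_of G h12 hdw (hd1 w1) (Or.inr (hS w1 h1u h1v))⟩
    push_neg at hC
    -- d is injective on S := univ \ {u, v}; image fills Icc 2 (n-1); degree n-1 vertex contradiction.
    exfalso
    set S : Finset V := Finset.univ \ {u, v} with hSdef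
    have hmemS : ∀ w, w ∈ S ↔ w ≠ u ∧ w ≠ v := by
      intro w
      simp [hSdef]
    have hScard : S.card = n - 2 := by
      rw [hSdef, Finset.card_sdiff_of_subset (Finset.subset_univ _), Finset.card_univ, hn,
        Finset.card_pair huv]
    have hinj : Set.InjOn d S := by
      intro a ha b hb hab
      by_contra hne
      obtain ⟨hau, hav⟩ := (hmemS a).mp ha
      obtain ⟨hbu, hbv⟩ := (hmemS b).mp hb
      exact hne (by by_contra h; exact h (False.elim ((fun hh => hh) (hC a b hne hau hav hbu hbv hab))))
    have himsub : S.image d ⊆ Finset.Icc 2 (n-1) := by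
      intro m hm
      obtain ⟨w, hw, rfl⟩ := Finset.mem_image.mp hm
      obtain ⟨hwu, hwv⟩ := (hmemS w).mp hw
      rw [Finset.mem_Icc]
      exact ⟨hS w hwu hwv, hdle w⟩
    have himcard : (S.image d).card = n - 2 := by
      rw [Finset.card_image_of_injOn hinj, hScard]
    have himeq : S.image d = Finset.Icc 2 (n-1) := by
      apply Finset.eq_of_subset_of_card_le himsub
      rw [himcard, Nat.card_Icc]
      omega
    have hmem : n - 1 ∈ S.image d := by
      rw [himeq, Finset.mem_Icc]
      omega
    obtain ⟨w, hw, hdw⟩ := Finset.mem_image.mp hmem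
    obtain ⟨hwu, hwv⟩ := (hmemS w).mp hw
    -- w has degree n-1, so adjacent to everything, in particular u
    have hsub : G.neighborSet w ⊆ {w}ᶜ := fun x hx => by
      simp only [Set.mem_compl_iff, Set.mem_singleton_iff]
      exact fun h => G.irrefl (h ▸ hx)
    have hcompl : ({w}ᶜ : Set V).ncard = n - 1 := by
      have h1 : ({w} : Set V).ncard + ({w}ᶜ : Set V).ncard = n := by
        rw [Set.ncard_add_ncard_compl, Nat.card_eq_fintype_card, hn]
      have h2 : ({w} : Set V).ncard = 1 := Set.ncard_singleton w
      omega
    have heq : G.neighborSet w = {w}ᶜ :=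
      Set.eq_of_subset_of_ncard_le hsub (by rw [hcompl]; exact hdw.ge) (Set.toFinite _)
    have hu : u ∈ G.neighborSet w := by
      rw [heq]
      simp [Ne.symm hwu]
    have : w ∈ G.neighborSet u := (SimpleGraph.mem_neighborSet G w u |>.mp hu).symm
    rw [hNu] at this
    exact hwv this
  · exact ⟨u, v, huv, good_of G huv hdeq (hd1 u) (Or.inl hA)⟩


/-- If `G` is a graph on `n ≥ 3` vertices with minimum degree at least 1,
then `fd(G) ≤ n - 2`. -/
theorem fd_le_card_sub_two_of_minDegree_pos {V : Type*} [Fintype V] (G : SimpleGraph V)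
    (n : ℕ) (hn : Fintype.card V = n) (h3 : 3 ≤ n)
    (hmin : ∀ v : V, (G.neighborSet v).Nonempty) :
    fd G ≤ n - 2 := by
  classical
  obtain ⟨u, v, huv, hk, hk1⟩ := good_pair G n hn h3 hmin
  set D : Set V := ({u, v} : Set V)ᶜ with hD
  set k : ℕ := (G.neighborSet u \ {v}).ncard with hkdef
  have hDcard : D.ncard = n - 2 := by
    have h1 : ({u, v} : Set V).ncard + D.ncard = n := by
      rw [hD, Set.ncard_add_ncard_compl, Nat.card_eq_fintype_card, hn]
    have h2 : ({u, v} : Set V).ncard = 2 := Set.ncard_pair huv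
    omega
  have hnotmem : ∀ x, x ∉ D ↔ x = u ∨ x = v := by
    intro x
    simp only [hD, Set.mem_compl_iff, Set.mem_insert_iff, Set.mem_singleton_iff, not_not]
  have hmem : ∀ x, x ∈ D ↔ x ≠ u ∧ x ≠ v := by
    intro x
    simp only [hD, Set.mem_compl_iff, Set.mem_insert_iff, Set.mem_singleton_iff]
    tauto
  have hintu : G.neighborSet u ∩ D = G.neighborSet u \ {v} := by
    ext w
    simp only [hD, Set.mem_inter_iff, Set.mem_compl_iff, Set.mem_insert_iff,
      Set.mem_singleton_iff, Set.mem_diff]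
    constructor
    · rintro ⟨hw, hne⟩; exact ⟨hw, fun h => hne (Or.inr h)⟩
    · rintro ⟨hw, hne⟩
      refine ⟨hw, ?_⟩
      rintro (rfl | rfl)
      · exact G.irrefl hw
      · exact hne rfl
  have hintv : G.neighborSet v ∩ D = G.neighborSet v \ {u} := by
    ext w
    simp only [hD, Set.mem_inter_iff, Set.mem_compl_iff, Set.mem_insert_iff,
      Set.mem_singleton_iff, Set.mem_diff]
    constructor
    · rintro ⟨hw, hne⟩; exact ⟨hw, fun h => hne (Or.inl h)⟩
    · rintro ⟨hw, hne⟩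
      refine ⟨hw, ?_⟩
      rintro (rfl | rfl)
      · exact hne rfl
      · exact G.irrefl hw
  have hdom : ∀ x ∉ D, ∃ w ∈ D, G.Adj w x := by
    intro x hx
    rcases (hnotmem x).mp hx with rfl | rfl
    · obtain ⟨w, hwu, hwv⟩ := (Set.ncard_pos (Set.toFinite _)).mp hk1
      refine ⟨w, (hmem w).mpr ⟨fun h => G.irrefl (h ▸ hwu), fun h => hwv (h ▸ rfl)⟩, hwu.symm⟩
    · have hk1' : 1 ≤ (G.neighborSet x \ {u}).ncard := hk ▸ hk1
      obtain ⟨w, hwv, hwu⟩ := (Set.ncard_pos (Set.toFinite _)).mp hk1'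
      refine ⟨w, (hmem w).mpr ⟨fun h => hwu (h ▸ rfl), fun h => G.irrefl (h ▸ hwv)⟩, hwv.symm⟩
  have hFD : IsFDSet G D := by
    refine ⟨k, hk1, hdom, ?_⟩
    intro x hx
    rcases (hnotmem x).mp hx with rfl | rfl
    · rw [hintu]
    · rw [hintv, ← hk]
  exact Nat.sInf_le ⟨D, hFD, hDcard⟩
end

section
/- If G is a graph of order n with at least 2 edges, then fd(G) ≤ n − 2. -/
section Aux

variable {V : Type*} [Fintype V] (G : SimpleGraph V)

lemma pigeon_aux (S : Finset V) (hS : 2 ≤ S.card)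
    (h : ∀ w ∈ S, G.neighborSet w ⊆ ↑S ∧ 1 ≤ (G.neighborSet w).ncard) :
    ∃ u ∈ S, ∃ v ∈ S, u ≠ v ∧ (G.neighborSet u).ncard = (G.neighborSet v).ncard := by
  classical
  have hmaps : ∀ w ∈ S, (G.neighborSet w).ncard ∈ Finset.Icc 1 (S.card - 1) := by
    intro w hw
    obtain ⟨hsub, hpos⟩ := h w hw
    refine Finset.mem_Icc.2 ⟨hpos, ?_⟩
    have hsub' : G.neighborSet w ⊆ ↑(S.erase w) := by
      intro x hx
      have hxw : x ≠ w := by rintro rfl; exact G.irrefl hx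
      exact Finset.mem_coe.2 (Finset.mem_erase.2 ⟨hxw, Finset.mem_coe.1 (hsub hx)⟩)
    calc (G.neighborSet w).ncard ≤ ((S.erase w : Finset V) : Set V).ncard :=
          Set.ncard_le_ncard hsub' (Set.toFinite _)
      _ = (S.erase w).card := Set.ncard_coe_finset _
      _ = S.card - 1 := Finset.card_erase_of_mem hw
  have hcard : (Finset.Icc 1 (S.card - 1)).card < S.card := by
    rw [Nat.card_Icc]; omega
  obtain ⟨u, hu, v, hv, huv, he⟩ := Finset.exists_ne_map_eq_of_card_lt_of_maps_to hcard hmaps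
  exact ⟨u, hu, v, hv, huv, he⟩

lemma key_pair (hm : 2 ≤ G.edgeSet.ncard) :
    ∃ u v : V, u ≠ v ∧ 1 ≤ (G.neighborSet u \ {v}).ncard ∧
      (G.neighborSet u \ {v}).ncard = (G.neighborSet v \ {u}).ncard := by
  classical
  by_cases h1 : ∃ u v : V, u ≠ v ∧ ¬ G.Adj u v ∧
      (G.neighborSet u).ncard = (G.neighborSet v).ncard ∧ 1 ≤ (G.neighborSet u).ncard
  · obtain ⟨u, v, huv, hadj, heq, hpos⟩ := h1
    have e1 : G.neighborSet u \ {v} = G.neighborSet u :=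
      Set.diff_singleton_eq_self (fun hv => hadj hv)
    have e2 : G.neighborSet v \ {u} = G.neighborSet v :=
      Set.diff_singleton_eq_self (fun hu => hadj (G.adj_symm hu))
    exact ⟨u, v, huv, by rwa [e1], by rw [e1, e2]; exact heq⟩
  by_cases h2 : ∃ u v : V, G.Adj u v ∧ 2 ≤ (G.neighborSet u).ncard ∧
      (G.neighborSet u).ncard = (G.neighborSet v).ncard
  · obtain ⟨u, v, hadj, h2u, heq⟩ := h2
    have hvN : v ∈ G.neighborSet u := hadj
    have huN : u ∈ G.neighborSet v := G.adj_symm hadj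
    have e1 : (G.neighborSet u \ {v}).ncard = (G.neighborSet u).ncard - 1 :=
      Set.ncard_diff_singleton_of_mem hvN
    have e2 : (G.neighborSet v \ {u}).ncard = (G.neighborSet v).ncard - 1 :=
      Set.ncard_diff_singleton_of_mem huN
    exact ⟨u, v, hadj.ne, by omega, by omega⟩
  exfalso
  push_neg at h1 h2
  -- positive-degree vertices
  set P : Finset V := Finset.univ.filter (fun v => 1 ≤ (G.neighborSet v).ncard) with hP
  have hmemP : ∀ w, w ∈ P ↔ 1 ≤ (G.neighborSet w).ncard := by
    intro w; simp [hP]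
  have hPsub : ∀ w, G.neighborSet w ⊆ ↑P := by
    intro w x hx
    have hwx : w ∈ G.neighborSet x := G.adj_symm hx
    exact Finset.mem_coe.2 ((hmemP x).2 ((Set.ncard_pos (Set.toFinite _)).2 ⟨w, hwx⟩))
  -- two distinct edges give two adjacency pairs
  obtain ⟨e, f, he, hf, hef⟩ := (Set.one_lt_ncard_iff (Set.toFinite _)).1 hm
  obtain ⟨a, b, rfl⟩ : ∃ a b, e = s(a, b) := Sym2.ind (fun x y => ⟨x, y, rfl⟩) e
  obtain ⟨c, d, rfl⟩ : ∃ c d, f = s(c, d) := Sym2.ind (fun x y => ⟨x, y, rfl⟩) f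
  rw [SimpleGraph.mem_edgeSet] at he hf
  -- first pigeonhole on P
  have haP : a ∈ P := (hmemP a).2 ((Set.ncard_pos (Set.toFinite _)).2 ⟨b, he⟩)
  have hbP : b ∈ P := (hmemP b).2 ((Set.ncard_pos (Set.toFinite _)).2 ⟨a, G.adj_symm he⟩)
  have hPcard : 2 ≤ P.card := Finset.one_lt_card.2 ⟨a, haP, b, hbP, he.ne⟩
  obtain ⟨u, hu, v, hv, huv, hdeq⟩ := pigeon_aux G P hPcard
    (fun w hw => ⟨hPsub w, (hmemP w).1 hw⟩)
  have hdu : 1 ≤ (G.neighborSet u).ncard := (hmemP u).1 hu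
  have hadj : G.Adj u v := by
    by_contra hna
    exact absurd hdu (Nat.not_le.2 (Nat.lt_of_lt_of_le (h1 u v huv hna hdeq) le_rfl))
  have hdu1 : (G.neighborSet u).ncard = 1 := by
    rcases Nat.lt_or_ge (G.neighborSet u).ncard 2 with h | h
    · omega
    · exact absurd hdeq (h2 u v hadj h)
  have hNu : G.neighborSet u = {v} := by
    obtain ⟨x, hx⟩ := Set.ncard_eq_one.1 hdu1
    have : v ∈ ({x} : Set V) := hx ▸ (hadj : v ∈ G.neighborSet u)
    rw [Set.mem_singleton_iff] at this
    rw [hx, this]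
  have hNv : G.neighborSet v = {u} := by
    have hdv1 : (G.neighborSet v).ncard = 1 := by omega
    obtain ⟨x, hx⟩ := Set.ncard_eq_one.1 hdv1
    have : u ∈ ({x} : Set V) := hx ▸ (G.adj_symm hadj : u ∈ G.neighborSet v)
    rw [Set.mem_singleton_iff] at this
    rw [hx, this]
  -- an edge distinct from s(u, v)
  obtain ⟨x, y, hxy, hne⟩ : ∃ x y, G.Adj x y ∧ s(x, y) ≠ s(u, v) := by
    by_cases hab : s(a, b) = s(u, v)
    · exact ⟨c, d, hf, fun h => hef (hab.trans h.symm)⟩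
    · exact ⟨a, b, he, hab⟩
  have hxuv : x ≠ u ∧ x ≠ v := by
    constructor
    · rintro rfl
      have : y ∈ G.neighborSet x := hxy
      rw [hNu, Set.mem_singleton_iff] at this
      exact hne (by rw [this])
    · rintro rfl
      have : y ∈ G.neighborSet x := hxy
      rw [hNv, Set.mem_singleton_iff] at this
      exact hne (by rw [this, Sym2.eq_swap])
  have hyuv : y ≠ u ∧ y ≠ v := by
    constructor
    · rintro rfl
      have : x ∈ G.neighborSet y := G.adj_symm hxy
      rw [hNu, Set.mem_singleton_iff] at this
      exact hne (by rw [this, Sym2.eq_swap])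
    · rintro rfl
      have : x ∈ G.neighborSet y := G.adj_symm hxy
      rw [hNv, Set.mem_singleton_iff] at this
      exact hne (by rw [this])
  -- second pigeonhole on P' = P \ {u, v}
  set P' : Finset V := (P.erase u).erase v with hP'
  have hmemP' : ∀ w, w ∈ P' ↔ w ≠ v ∧ w ≠ u ∧ w ∈ P := by
    intro w; simp [hP', Finset.mem_erase, and_assoc]
  have hxP' : x ∈ P' := (hmemP' x).2 ⟨hxuv.2, hxuv.1,
    (hmemP x).2 ((Set.ncard_pos (Set.toFinite _)).2 ⟨y, hxy⟩)⟩
  have hyP' : y ∈ P' := (hmemP' y).2 ⟨hyuv.2, hyuv.1,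
    (hmemP y).2 ((Set.ncard_pos (Set.toFinite _)).2 ⟨x, G.adj_symm hxy⟩)⟩
  have hP'card : 2 ≤ P'.card := Finset.one_lt_card.2 ⟨x, hxP', y, hyP', hxy.ne⟩
  have hcond : ∀ w ∈ P', G.neighborSet w ⊆ ↑P' ∧ 1 ≤ (G.neighborSet w).ncard := by
    intro w hw
    obtain ⟨hwv, hwu, hwP⟩ := (hmemP' w).1 hw
    refine ⟨?_, (hmemP w).1 hwP⟩
    intro z hz
    have hzP : z ∈ P := Finset.mem_coe.1 (hPsub w hz)
    have hzu : z ≠ u := by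
      rintro rfl
      have : w ∈ G.neighborSet z := G.adj_symm hz
      rw [hNu, Set.mem_singleton_iff] at this
      exact hwv this
    have hzv : z ≠ v := by
      rintro rfl
      have : w ∈ G.neighborSet z := G.adj_symm hz
      rw [hNv, Set.mem_singleton_iff] at this
      exact hwu this
    exact Finset.mem_coe.2 ((hmemP' z).2 ⟨hzv, hzu, hzP⟩)
  obtain ⟨u', hu', v', hv', huv', hdeq'⟩ := pigeon_aux G P' hP'card hcond
  have hdu' : 1 ≤ (G.neighborSet u').ncard := (hcond u' hu').2
  have hadj' : G.Adj u' v' := by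
    by_contra hna
    exact absurd hdu' (Nat.not_le.2 (h1 u' v' huv' hna hdeq'))
  have hdu'1 : (G.neighborSet u').ncard = 1 := by
    rcases Nat.lt_or_ge (G.neighborSet u').ncard 2 with h | h
    · omega
    · exact absurd hdeq' (h2 u' v' hadj' h)
  -- u and u' : nonadjacent, equal degree 1 → contradiction with h1
  have huu' : u ≠ u' := by
    rintro rfl
    exact absurd ((hmemP' u).1 hu').2.1 (by simp)
  have hnadj : ¬ G.Adj u u' := by
    intro h
    have : u' ∈ G.neighborSet u := h
    rw [hNu, Set.mem_singleton_iff] at this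
    exact ((hmemP' u').1 hu').1 this
  exact absurd (by omega : 1 ≤ (G.neighborSet u).ncard)
    (Nat.not_le.2 (h1 u u' huu' hnadj (by omega)))

end Aux


/-- If `G` is a graph of order `n` with at least 2 edges, then `fd(G) ≤ n - 2`. -/
theorem fd_le_card_sub_two_of_two_edges {V : Type*} [Fintype V] (G : SimpleGraph V)
    (n : ℕ) (hn : Fintype.card V = n) (hm : 2 ≤ G.edgeSet.ncard) :
    fd G ≤ n - 2 := by
  classical
  obtain ⟨u, v, huv, hpos, heq⟩ := key_pair G hm
  set D : Set V := {u, v}ᶜ with hD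
  have hmemD : ∀ w, w ∉ D ↔ w = u ∨ w = v := by
    intro w; simp [hD]; tauto
  have hIu : G.neighborSet u ∩ D = G.neighborSet u \ {v} := by
    ext z
    simp only [hD, Set.mem_inter_iff, Set.mem_compl_iff, Set.mem_insert_iff,
      Set.mem_singleton_iff, Set.mem_diff]
    constructor
    · rintro ⟨hz, h⟩; exact ⟨hz, fun h' => h (Or.inr h')⟩
    · rintro ⟨hz, h⟩
      refine ⟨hz, ?_⟩
      rintro (rfl | rfl)
      exacts [G.irrefl hz, h rfl]
  have hIv : G.neighborSet v ∩ D = G.neighborSet v \ {u} := by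
    ext z
    simp only [hD, Set.mem_inter_iff, Set.mem_compl_iff, Set.mem_insert_iff,
      Set.mem_singleton_iff, Set.mem_diff]
    constructor
    · rintro ⟨hz, h⟩; exact ⟨hz, fun h' => h (Or.inl h')⟩
    · rintro ⟨hz, h⟩
      refine ⟨hz, ?_⟩
      rintro (rfl | rfl)
      exacts [h rfl, G.irrefl hz]
  have hDfd : IsFDSet G D := by
    refine ⟨(G.neighborSet u \ {v}).ncard, hpos, ?_, ?_⟩
    · intro w hw
      rcases (hmemD w).1 hw with rfl | rfl
      · obtain ⟨z, hz⟩ := (Set.ncard_pos (Set.toFinite _)).1 hpos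
        have hzD : z ∈ D := by
          rw [hD]
          simp only [Set.mem_compl_iff, Set.mem_insert_iff, Set.mem_singleton_iff]
          push_neg
          exact ⟨fun h => G.irrefl (h ▸ hz.1), fun h => hz.2 h⟩
        exact ⟨z, hzD, G.adj_symm hz.1⟩
      · obtain ⟨z, hz⟩ := (Set.ncard_pos (Set.toFinite _)).1 (heq ▸ hpos)
        have hzD : z ∈ D := by
          rw [hD]
          simp only [Set.mem_compl_iff, Set.mem_insert_iff, Set.mem_singleton_iff]
          push_neg
          exact ⟨fun h => hz.2 h, fun h => G.irrefl (h ▸ hz.1)⟩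
        exact ⟨z, hzD, G.adj_symm hz.1⟩
    · intro w hw
      rcases (hmemD w).1 hw with rfl | rfl
      · rw [hIu]
      · rw [hIv, ← heq]
  have hDcard : D.ncard = n - 2 := by
    have h2 : ({u, v} : Set V).ncard = 2 := Set.ncard_pair huv
    have := Set.ncard_add_ncard_compl ({u, v} : Set V) (Set.toFinite _) (Set.toFinite _)
    rw [Nat.card_eq_fintype_card, hn] at this
    rw [hD]; omega
  have hmem : (n - 2) ∈ {m | ∃ D : Set V, IsFDSet G D ∧ D.ncard = m} :=
    ⟨D, hDfd, hDcard⟩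
  exact Nat.sInf_le hmem
end

section
/- If G is a connected graph on n ≥ 2 vertices whose complement is also connected, then fd(G) = fd(complement of G). -/
lemma exists_crossing {V : Type*} (G : SimpleGraph V) {D : Set V} {u v : V}
    (w : G.Walk u v) :
    u ∈ D → v ∉ D → ∃ a ∈ D, ∃ b, b ∉ D ∧ G.Adj a b := by
  induction w with
  | nil => exact fun hu hv => absurd hu hv
  | @cons x y z h p ih =>
    intro hx hz
    by_cases hy : y ∈ D
    · exact ih hy hz
    · exact ⟨x, hx, y, hy, h⟩

lemma fd_transfer {V : Type*} [Fintype V] (G : SimpleGraph V) (hG : G.Connected)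
    {D : Set V} (hD : IsFDSet Gᶜ D) : IsFDSet G D := by
  obtain ⟨k, hk1, hdom, hfair⟩ := hD
  by_cases hDV : ∀ v, v ∈ D
  · exact ⟨1, le_refl 1, fun v hv => absurd (hDV v) hv, fun v hv => absurd (hDV v) hv⟩
  push_neg at hDV
  obtain ⟨v₀, hv₀⟩ := hDV
  have hDfin : D.Finite := Set.toFinite D
  have hkle : k ≤ D.ncard := by
    rw [← hfair v₀ hv₀]
    exact Set.ncard_le_ncard Set.inter_subset_right hDfin
  -- key: for v ∉ D, N_G(v) ∩ D = D \ (N_Gᶜ(v) ∩ D)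
  have hkey : ∀ v ∉ D, G.neighborSet v ∩ D = D \ (Gᶜ.neighborSet v ∩ D) := by
    intro v hv
    ext u
    simp only [Set.mem_inter_iff, Set.mem_diff, SimpleGraph.mem_neighborSet,
      SimpleGraph.compl_adj]
    constructor
    · rintro ⟨hadj, huD⟩
      exact ⟨huD, fun h => h.1.2 hadj⟩
    · rintro ⟨huD, hno⟩
      refine ⟨?_, huD⟩
      by_contra hna
      exact hno ⟨⟨fun h => hv (h ▸ huD), hna⟩, huD⟩
  have hncard : ∀ v ∉ D, (G.neighborSet v ∩ D).ncard = D.ncard - k := by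
    intro v hv
    rw [hkey v hv, Set.ncard_diff Set.inter_subset_right, hfair v hv]
  -- rule out k = D.ncard using connectivity of G
  have hklt : k < D.ncard := by
    rcases lt_or_eq_of_le hkle with h | h
    · exact h
    · exfalso
      obtain ⟨u₀, hu₀, _⟩ := hdom v₀ hv₀
      obtain ⟨w⟩ := hG.preconnected u₀ v₀
      obtain ⟨a, ha, b, hb, hab⟩ := exists_crossing G w hu₀ hv₀
      have : (G.neighborSet b ∩ D).ncard = 0 := by
        rw [hncard b hb, h]; omega
      rw [Set.ncard_eq_zero (Set.toFinite _)] at this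
      exact absurd this (Set.nonempty_iff_ne_empty.mp ⟨a, hab.symm, ha⟩)
  refine ⟨D.ncard - k, by omega, fun v hv => ?_, hncard⟩
  have : (G.neighborSet v ∩ D).Nonempty := by
    rw [Set.nonempty_iff_ne_empty]
    intro h
    have := hncard v hv
    rw [h, Set.ncard_empty] at this
    omega
  obtain ⟨u, hu1, hu2⟩ := this
  exact ⟨u, hu2, hu1.symm⟩

/-- If `G` is a connected graph on `n ≥ 2` vertices whose complement is also connected,
then `fd(G) = fd(Gᶜ)`. -/
theorem fd_compl_eq {V : Type*} [Fintype V] (G : SimpleGraph V)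
    (h2 : 2 ≤ Fintype.card V) (hG : G.Connected) (hGc : Gᶜ.Connected) :
    fd G = fd Gᶜ := by
  unfold fd
  congr 1
  ext m
  constructor
  · rintro ⟨D, hD, rfl⟩
    refine ⟨D, ?_, rfl⟩
    have := fd_transfer Gᶜ hGc (D := D)
    rw [compl_compl] at this
    exact this hD
  · rintro ⟨D, hD, rfl⟩
    exact ⟨D, fd_transfer G hG hD, rfl⟩
end

section
/- If G is a connected graph on n ≥ 2 vertices whose complement has q ≥ 2 connected components, then fd(G) ≤ n/q ≤ n/2. -/
/-- If `G` is a connected graph on `n ≥ 2` vertices whose complement has `q ≥ 2`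
connected components, then `fd(G) ≤ n/q ≤ n/2`. -/
theorem fd_le_of_compl_components {V : Type*} [Fintype V] (G : SimpleGraph V)
    (n q : ℕ) (hn : Fintype.card V = n) (h2 : 2 ≤ n) (hG : G.Connected)
    (hq : 2 ≤ q) (hcomp : Nat.card Gᶜ.ConnectedComponent = q) :
    (fd G : ℚ) ≤ (n : ℚ) / q ∧ (n : ℚ) / q ≤ (n : ℚ) / 2 := by
  classical
  have hq0 : 0 < q := by omega
  letI : Fintype Gᶜ.ConnectedComponent := Fintype.ofFinite _
  have hcard : Fintype.card Gᶜ.ConnectedComponent = q := by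
    rw [← Nat.card_eq_fintype_card]; exact hcomp
  have hne : (Finset.univ : Finset Gᶜ.ConnectedComponent).Nonempty := by
    rw [← Finset.card_pos, Finset.card_univ, hcard]; omega
  set F : Gᶜ.ConnectedComponent → ℕ :=
    fun c => (Finset.univ.filter (fun v => Gᶜ.connectedComponentMk v = c)).card with hF
  obtain ⟨c₀, -, hmin⟩ := Finset.exists_min_image Finset.univ F hne
  set Dfin : Finset V := Finset.univ.filter (fun v => Gᶜ.connectedComponentMk v = c₀) with hDfin
  set D : Set V := ↑Dfin with hD
  have hmemD : ∀ v, v ∈ D ↔ Gᶜ.connectedComponentMk v = c₀ := by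
    intro v; simp [hD, hDfin]
  have hDcard : D.ncard = F c₀ := by
    rw [hD, Set.ncard_coe_finset]
  have hm1 : 1 ≤ F c₀ := by
    obtain ⟨v, hv⟩ := c₀.exists_rep
    exact Finset.card_pos.mpr ⟨v, Finset.mem_filter.mpr ⟨Finset.mem_univ v, hv⟩⟩
  -- every vertex outside D is G-adjacent to every vertex of D
  have hadj : ∀ v ∉ D, ∀ u ∈ D, G.Adj u v := by
    intro v hv u hu
    by_contra hne'
    have huv : u ≠ v := by
      rintro rfl; exact hv hu
    have : Gᶜ.Adj u v := by
      rw [SimpleGraph.compl_adj]; exact ⟨huv, hne'⟩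
    have hsame : Gᶜ.connectedComponentMk u = Gᶜ.connectedComponentMk v :=
      SimpleGraph.ConnectedComponent.sound this.reachable
    rw [hmemD] at hu hv
    exact hv (hsame ▸ hu)
  have hfair : IsKFDSet G (F c₀) D := by
    constructor
    · intro v hv
      obtain ⟨u, hu⟩ : ∃ u, u ∈ D := by
        obtain ⟨w, hw⟩ := c₀.exists_rep
        exact ⟨w, (hmemD w).mpr hw⟩
      exact ⟨u, hu, hadj v hv u hu⟩
    · intro v hv
      have : G.neighborSet v ∩ D = D := by
        apply Set.inter_eq_self_of_subset_right
        intro u hu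
        exact (hadj v hv u hu).symm
      rw [this, hDcard]
  have hfd : fd G ≤ F c₀ := by
    apply Nat.sInf_le
    exact ⟨D, ⟨F c₀, hm1, hfair⟩, hDcard⟩
  -- counting: q * F c₀ ≤ n
  have hsum : ∑ c : Gᶜ.ConnectedComponent, F c = n := by
    rw [← hn, ← Finset.card_univ]
    exact (Finset.card_eq_sum_card_fiberwise (by intro x _; exact Finset.mem_univ _)).symm
  have hqm : q * F c₀ ≤ n := by
    calc q * F c₀ = ∑ _c : Gᶜ.ConnectedComponent, F c₀ := by
          rw [Finset.sum_const, Finset.card_univ, hcard, smul_eq_mul]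
      _ ≤ ∑ c : Gᶜ.ConnectedComponent, F c :=
          Finset.sum_le_sum (fun c _ => hmin c (Finset.mem_univ c))
      _ = n := hsum
  constructor
  · have h1 : (fd G : ℚ) ≤ (F c₀ : ℚ) := by exact_mod_cast hfd
    have h2' : (F c₀ : ℚ) ≤ (n : ℚ) / q := by
      rw [le_div_iff₀ (by exact_mod_cast hq0)]
      have : (F c₀ : ℚ) * q = (q * F c₀ : ℕ) := by push_cast; ring
      rw [this]; exact_mod_cast hqm
    linarith
  · apply div_le_div_of_nonneg_left (by positivity) (by norm_num)
    exact_mod_cast hq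
end

section
/- If a graph G possesses a perfect dominating set (a dominating set that is also a packing), then the domination number, the 1-fair domination number, and the fair domination number of G all coincide: γ(G) = fd₁(G) = fd(G). -/
/-- If `G` has a perfect dominating set (a dominating set that is a packing, i.e. its
vertices are pairwise at distance at least 3, equivalently have pairwise disjoint closed
neighborhoods), then `γ(G) = fd₁(G) = fd(G)`. -/
theorem domNum_eq_fd1_eq_fd_of_perfect_dominating {V : Type*} [Fintype V]
    (G : SimpleGraph V) (S : Set V)
    (hdom : ∀ v ∉ S, ∃ u ∈ S, G.Adj u v)
    (hpack : ∀ u ∈ S, ∀ v ∈ S, u ≠ v →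
      Disjoint (G.neighborSet u ∪ {u}) (G.neighborSet v ∪ {v})) :
    domNum G = fd1 G ∧ fd1 G = fd G := by
  classical
  -- S is a 1-fair dominating set
  have hS1 : IsKFDSet G 1 S := by
    refine ⟨hdom, fun v hv => ?_⟩
    obtain ⟨u, huS, huv⟩ := hdom v hv
    have hset : G.neighborSet v ∩ S = {u} := by
      ext w
      simp only [Set.mem_inter_iff, SimpleGraph.mem_neighborSet, Set.mem_singleton_iff]
      constructor
      · rintro ⟨hw, hwS⟩
        by_contra hne
        exact Set.disjoint_left.mp (hpack w hwS u huS hne)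
          (Or.inl (SimpleGraph.mem_neighborSet _ _ _ |>.mpr hw.symm))
          (Or.inl (SimpleGraph.mem_neighborSet _ _ _ |>.mpr huv))
      · rintro rfl; exact ⟨huv.symm, huS⟩
    rw [hset, Set.ncard_singleton]
  -- every dominating set has at least |S| elements
  have hB : ∀ D : Set V, (∀ v ∉ D, ∃ u ∈ D, G.Adj u v) → S.ncard ≤ D.ncard := by
    intro D hD
    have hchoice : ∀ s : V, s ∈ S → ∃ d, d ∈ D ∧ d ∈ G.neighborSet s ∪ {s} := by
      intro s hs
      by_cases h : s ∈ D
      · exact ⟨s, h, Or.inr rfl⟩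
      · obtain ⟨u, huD, hus⟩ := hD s h
        exact ⟨u, huD, Or.inl ((SimpleGraph.mem_neighborSet _ _ _).mpr hus.symm)⟩
    set f : V → V := fun s => if h : s ∈ S then (hchoice s h).choose else s with hf
    have hfD : ∀ s ∈ S, f s ∈ D := by
      intro s hs
      simp only [hf, dif_pos hs]
      exact (hchoice s hs).choose_spec.1
    have hfN : ∀ s ∈ S, f s ∈ G.neighborSet s ∪ {s} := by
      intro s hs
      simp only [hf, dif_pos hs]
      exact (hchoice s hs).choose_spec.2
    refine Set.ncard_le_ncard_of_injOn f hfD ?_ (Set.toFinite D)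
    intro a ha b hb hab
    by_contra hne
    exact Set.disjoint_left.mp (hpack a ha b hb hne) (hfN a ha) (hab ▸ hfN b hb)
  -- nonemptiness facts and basic inequalities
  have hfd1_mem : S.ncard ∈ {m | ∃ D : Set V, IsKFDSet G 1 D ∧ D.ncard = m} := ⟨S, hS1, rfl⟩
  have hfd_mem : S.ncard ∈ {m | ∃ D : Set V, IsFDSet G D ∧ D.ncard = m} :=
    ⟨S, ⟨1, le_refl 1, hS1⟩, rfl⟩
  have h2 : fd1 G ≤ S.ncard := Nat.sInf_le hfd1_mem
  have h3 : fd G ≤ fd1 G := by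
    have := Nat.sInf_mem ⟨S.ncard, hfd1_mem⟩
    obtain ⟨D1, hD1, hD1c⟩ := this
    exact Nat.sInf_le ⟨D1, ⟨1, le_refl 1, hD1⟩, hD1c⟩
  have h4 : domNum G ≤ fd G := by
    have := Nat.sInf_mem ⟨S.ncard, hfd_mem⟩
    obtain ⟨D2, hD2, hD2c⟩ := this
    obtain ⟨k, hk, hD2k⟩ := hD2
    exact Nat.sInf_le ⟨D2, hD2k.1, hD2c⟩
  have h1 : S.ncard ≤ domNum G := by
    have hne : {m | ∃ D : Set V, (∀ v ∉ D, ∃ u ∈ D, G.Adj u v) ∧ D.ncard = m}.Nonempty :=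
      ⟨(Set.univ : Set V).ncard, Set.univ, fun v hv => absurd (Set.mem_univ v) hv, rfl⟩
    obtain ⟨D0, hD0, hD0c⟩ := Nat.sInf_mem hne
    have := hB D0 hD0
    rw [hD0c] at this
    exact this
  constructor <;> omega
end

section
/- For the cycle C_n with n ≥ 3: fd(C_n) = ⌈n/3⌉ if n ≢ 2 (mod 3) or n = 3, and fd(C_n) = ⌈n/3⌉ + 1 if n ≡ 2 (mod 3) and n ≥ 5. -/
open SimpleGraph Finset


lemma myval_add_one {m : ℕ} (v : Fin (m+3)) :
    (v + 1).val = if v.val + 1 = m + 3 then 0 else v.val + 1 := by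
  have hv := v.isLt
  rw [Fin.add_def]
  simp only [Fin.val_one]
  split_ifs with h
  · rw [h, Nat.mod_self]
  · exact Nat.mod_eq_of_lt (by omega)

lemma myval_sub_one {m : ℕ} (v : Fin (m+3)) :
    (v - 1).val = if v.val = 0 then m + 2 else v.val - 1 := by
  have hv := v.isLt
  rw [Fin.sub_def]
  simp only [Fin.val_one]
  split_ifs with h
  · rw [h]; simp
  · have h2 : m + 3 - 1 + v.val = (v.val - 1) + (m+3) := by omega
    rw [h2, Nat.add_mod_right]
    exact Nat.mod_eq_of_lt (by omega)

lemma adj_sub_one {m : ℕ} (v : Fin (m+3)) : (cycleGraph (m+3)).Adj (v-1) v :=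
  cycleGraph_adj (n := m+1).mpr (Or.inr (sub_sub_cancel v 1))

lemma adj_add_one {m : ℕ} (v : Fin (m+3)) : (cycleGraph (m+3)).Adj (v+1) v :=
  cycleGraph_adj (n := m+1).mpr (Or.inl (add_sub_cancel_left v 1))

lemma nbhd_eq {m : ℕ} (v : Fin (m+3)) :
    (cycleGraph (m+3)).neighborSet v = {v - 1, v + 1} :=
  cycleGraph_neighborSet (n := m+1)

lemma pair_inter_one {m : ℕ} (D : Set (Fin (m+3))) (v : Fin (m+3))
    (h : ((v-1) ∈ D ∧ (v+1) ∉ D) ∨ ((v-1) ∉ D ∧ (v+1) ∈ D)) :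
    ((cycleGraph (m+3)).neighborSet v ∩ D).ncard = 1 := by
  rw [nbhd_eq]
  rcases h with ⟨h1, h2⟩ | ⟨h1, h2⟩
  · have hs : ({v-1, v+1} : Set (Fin (m+3))) ∩ D = {v-1} := by
      apply Set.eq_singleton_iff_unique_mem.mpr
      refine ⟨⟨Or.inl rfl, h1⟩, ?_⟩
      rintro x ⟨(rfl | rfl), hx⟩
      · rfl
      · exact absurd hx h2
    rw [hs, Set.ncard_singleton]
  · have hs : ({v-1, v+1} : Set (Fin (m+3))) ∩ D = {v+1} := by
      apply Set.eq_singleton_iff_unique_mem.mpr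
      refine ⟨⟨Or.inr rfl, h2⟩, ?_⟩
      rintro x ⟨(rfl | rfl), hx⟩
      · exact absurd hx h1
      · rfl
    rw [hs, Set.ncard_singleton]

lemma sum_inter_card {m : ℕ} (F : Finset (Fin (m+3))) :
    ∑ v : Fin (m+3), ((cycleGraph (m+3)).neighborFinset v ∩ F).card = 2 * F.card := by
  have h1 : ∀ v : Fin (m+3), ((cycleGraph (m+3)).neighborFinset v ∩ F).card
      = ∑ u ∈ F, if (cycleGraph (m+3)).Adj v u then 1 else 0 := by
    intro v
    rw [← Finset.card_filter]
    congr 1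
    ext u
    simp [SimpleGraph.mem_neighborFinset, and_comm]
  simp_rw [h1]
  rw [Finset.sum_comm]
  have h2 : ∀ u : Fin (m+3),
      (∑ v : Fin (m+3), if (cycleGraph (m+3)).Adj v u then 1 else 0) = 2 := by
    intro u
    rw [← Finset.card_filter]
    have h3 : (Finset.univ.filter (fun v => (cycleGraph (m+3)).Adj v u))
        = (cycleGraph (m+3)).neighborFinset u := by
      ext w; simp [SimpleGraph.mem_neighborFinset, adj_comm]
    rw [h3]
    exact cycleGraph_degree_three_le (n := m)
  simp_rw [h2]
  rw [Finset.sum_const, smul_eq_mul, mul_comm]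

lemma fd_lower {m : ℕ} (D : Set (Fin (m+3))) (hD : IsFDSet (cycleGraph (m+3)) D) :
    (m + 5) / 3 ≤ D.ncard ∧ ((m+3) % 3 = 2 → (m + 5) / 3 + 1 ≤ D.ncard) := by
  classical
  obtain ⟨j, hj1, hdom, hfair⟩ := hD
  by_cases hU : D = Set.univ
  · subst hU
    rw [Set.ncard_univ, Nat.card_eq_fintype_card, Fintype.card_fin]
    omega
  · obtain ⟨v₀, hv₀⟩ := (Set.ne_univ_iff_exists_notMem D).mp hU
    set F : Finset (Fin (m+3)) := Finset.univ.filter (· ∈ D) with hFdef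
    have hFmem : ∀ v, v ∈ F ↔ v ∈ D := by intro v; simp [hFdef]
    have hFD : (F : Set (Fin (m+3))) = D := by ext v; simp [hFmem]
    have hcard : D.ncard = F.card := by rw [← hFD, Set.ncard_coe_finset]
    -- key: for v ∉ D, the neighborhood count as a finset card
    have hkey : ∀ v ∉ D, ((cycleGraph (m+3)).neighborFinset v ∩ F).card = j := by
      intro v hv
      rw [← hfair v hv]
      have : (cycleGraph (m+3)).neighborSet v ∩ D
          = ↑((cycleGraph (m+3)).neighborFinset v ∩ F) := by
        ext w; simp [SimpleGraph.mem_neighborFinset, hFmem]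
      rw [this, Set.ncard_coe_finset]
    have hFlt : F.card < m + 3 := by
      have : F ≠ Finset.univ := by
        intro h; exact hv₀ ((hFmem v₀).mp (h ▸ Finset.mem_univ v₀))
      have := (Finset.card_lt_iff_ne_univ F).mpr this
      simpa using this
    have hsplit : (∑ v ∈ F, ((cycleGraph (m+3)).neighborFinset v ∩ F).card)
        + (∑ v ∈ Fᶜ, ((cycleGraph (m+3)).neighborFinset v ∩ F).card) = 2 * F.card := by
      rw [Finset.sum_add_sum_compl]
      exact sum_inter_card F
    have hcompl : (∑ v ∈ Fᶜ, ((cycleGraph (m+3)).neighborFinset v ∩ F).card)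
        = j * (m + 3 - F.card) := by
      rw [Finset.sum_congr rfl (fun v hv => hkey v (by
        rw [Finset.mem_compl] at hv; exact fun h => hv ((hFmem v).mpr h)))]
      rw [Finset.sum_const, smul_eq_mul, Finset.card_compl, Fintype.card_fin, mul_comm]
    have hj2 : j ≤ 2 := by
      rw [← hkey v₀ hv₀]
      calc ((cycleGraph (m+3)).neighborFinset v₀ ∩ F).card
          ≤ ((cycleGraph (m+3)).neighborFinset v₀).card :=
            Finset.card_le_card Finset.inter_subset_left
        _ = 2 := cycleGraph_degree_three_le (n := m)
    set S := ∑ v ∈ F, ((cycleGraph (m+3)).neighborFinset v ∩ F).card with hSdef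
    rw [hcompl] at hsplit
    have hmul : m + 3 - F.card ≤ j * (m + 3 - F.card) :=
      Nat.le_mul_of_pos_left _ hj1
    constructor
    · omega
    · intro hmod
      by_contra hlt
      have hceq : F.card = (m + 5) / 3 := by omega
      have h3c : 3 * F.card = m + 4 := by omega
      interval_cases j
      · -- j = 1 : S = 1, contradiction by symmetry
        have hS1 : S = 1 := by omega
        obtain ⟨v, hvF, hvne⟩ := Finset.exists_ne_zero_of_sum_ne_zero
          (by rw [← hSdef, hS1]; exact one_ne_zero)
        obtain ⟨u, hu⟩ := Finset.card_ne_zero.mp hvne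
        rw [Finset.mem_inter, SimpleGraph.mem_neighborFinset] at hu
        have huv : u ≠ v := (hu.1.ne).symm
        have huF : u ∈ F := hu.2
        have htu : ((cycleGraph (m+3)).neighborFinset u ∩ F).card ≠ 0 := by
          rw [Finset.card_ne_zero]
          exact ⟨v, Finset.mem_inter.mpr ⟨(SimpleGraph.mem_neighborFinset _ _ _).mpr hu.1.symm, hvF⟩⟩
        have hsub : ({v, u} : Finset (Fin (m+3))) ⊆ F := by
          intro x hx
          rcases Finset.mem_insert.mp hx with rfl | hx
          · exact hvF
          · rw [Finset.mem_singleton] at hx; exact hx ▸ huF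
        have hge : ((cycleGraph (m+3)).neighborFinset v ∩ F).card
            + ((cycleGraph (m+3)).neighborFinset u ∩ F).card ≤ S := by
          have h9 := Finset.sum_le_sum_of_subset
            (f := fun w => ((cycleGraph (m+3)).neighborFinset w ∩ F).card) hsub
          rw [Finset.sum_pair huv.symm] at h9
          exact h9
        omega
      · -- j = 2
        omega

lemma card_filter_mod3 (n : ℕ) :
    ((Finset.range n).filter (fun i => i % 3 = 0)).card = (n + 2) / 3 := by
  induction n with
  | zero => simp
  | succ n ih =>
    rw [Finset.range_add_one, Finset.filter_insert]
    by_cases h : n % 3 = 0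
    · rw [if_pos h, Finset.card_insert_of_notMem (by simp), ih]
      omega
    · rw [if_neg h, ih]
      omega

lemma card_filter_D2 (n : ℕ) :
    ((Finset.range n).filter (fun i => i = 0 ∨ i % 3 = 1)).card = (n + 1) / 3 + min n 1 := by
  induction n with
  | zero => simp
  | succ n ih =>
    rw [Finset.range_add_one, Finset.filter_insert]
    by_cases h : n = 0 ∨ n % 3 = 1
    · rw [if_pos h, Finset.card_insert_of_notMem (by simp), ih]
      omega
    · rw [if_neg h, ih]
      omega

lemma ncard_setOf_val (N : ℕ) (p : ℕ → Prop) [DecidablePred p] :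
    ({v : Fin N | p v.val}).ncard = ((Finset.range N).filter p).card := by
  have h : ({v : Fin N | p v.val}) = ↑(Finset.univ.filter (fun v : Fin N => p v.val)) := by
    ext v; simp
  rw [h, Set.ncard_coe_finset, Finset.card_filter, Finset.card_filter,
    ← Fin.sum_univ_eq_sum_range]

lemma D0_fair {m : ℕ} (hm : (m+3) % 3 ≠ 2) :
    IsKFDSet (cycleGraph (m+3)) 1 {v : Fin (m+3) | v.val % 3 = 0} := by
  have key : ∀ v : Fin (m+3), v ∉ {v : Fin (m+3) | v.val % 3 = 0} →
      ((v-1) ∈ {v : Fin (m+3) | v.val % 3 = 0} ∧ (v+1) ∉ {v : Fin (m+3) | v.val % 3 = 0})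
      ∨ ((v-1) ∉ {v : Fin (m+3) | v.val % 3 = 0} ∧ (v+1) ∈ {v : Fin (m+3) | v.val % 3 = 0}) := by
    intro v hv
    have hlt := v.isLt
    simp only [Set.mem_setOf_eq] at hv ⊢
    rw [myval_sub_one, myval_add_one]
    split_ifs <;> omega
  refine ⟨?_, ?_⟩
  · intro v hv
    rcases key v hv with ⟨h1, _⟩ | ⟨_, h2⟩
    · exact ⟨v - 1, h1, adj_sub_one v⟩
    · exact ⟨v + 1, h2, adj_add_one v⟩
  · intro v hv
    exact pair_inter_one _ _ (key v hv)

lemma D2_fair {m : ℕ} (hm : (m+3) % 3 = 2) :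
    IsKFDSet (cycleGraph (m+3)) 1 {v : Fin (m+3) | v.val = 0 ∨ v.val % 3 = 1} := by
  set D : Set (Fin (m+3)) := {v : Fin (m+3) | v.val = 0 ∨ v.val % 3 = 1} with hDdef
  have key : ∀ v : Fin (m+3), v ∉ D →
      ((v-1) ∈ D ∧ (v+1) ∉ D) ∨ ((v-1) ∉ D ∧ (v+1) ∈ D) := by
    intro v hv
    have hlt := v.isLt
    simp only [hDdef, Set.mem_setOf_eq] at hv ⊢
    rw [myval_sub_one, myval_add_one]
    split_ifs <;> (try simp only [false_or, or_false]) <;> omega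
  refine ⟨?_, ?_⟩
  · intro v hv
    rcases key v hv with ⟨h1, _⟩ | ⟨_, h2⟩
    · exact ⟨v - 1, h1, adj_sub_one v⟩
    · exact ⟨v + 1, h2, adj_add_one v⟩
  · intro v hv
    exact pair_inter_one _ _ (key v hv)


/-- For the cycle `C_n` with `n ≥ 3`: `fd(C_n) = ⌈n/3⌉` if `n ≢ 2 (mod 3)`, and
`fd(C_n) = ⌈n/3⌉ + 1` if `n ≡ 2 (mod 3)` (note `n ≡ 2 (mod 3)` and `n ≥ 3` force `n ≥ 5`). -/
theorem fd_cycleGraph (n : ℕ) (hn : 3 ≤ n) :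
    (n % 3 ≠ 2 → fd (SimpleGraph.cycleGraph n) = (n + 2) / 3) ∧
    (n % 3 = 2 ∧ 5 ≤ n → fd (SimpleGraph.cycleGraph n) = (n + 2) / 3 + 1) := by
  obtain ⟨m, rfl⟩ : ∃ m, n = m + 3 := ⟨n - 3, by omega⟩
  constructor
  · intro hmod
    have hmem : (m + 3 + 2) / 3 ∈
        {k | ∃ D : Set (Fin (m+3)), IsFDSet (cycleGraph (m+3)) D ∧ D.ncard = k} := by
      refine ⟨{v : Fin (m+3) | v.val % 3 = 0}, ⟨1, le_refl 1, D0_fair hmod⟩, ?_⟩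
      rw [ncard_setOf_val (m+3) (fun i => i % 3 = 0), card_filter_mod3]
    apply le_antisymm
    · exact Nat.sInf_le hmem
    · apply le_csInf ⟨_, hmem⟩
      rintro b ⟨D, hD, rfl⟩
      have := (fd_lower D hD).1
      omega
  · rintro ⟨hmod, -⟩
    have hmem : (m + 3 + 2) / 3 + 1 ∈
        {k | ∃ D : Set (Fin (m+3)), IsFDSet (cycleGraph (m+3)) D ∧ D.ncard = k} := by
      refine ⟨{v : Fin (m+3) | v.val = 0 ∨ v.val % 3 = 1}, ⟨1, le_refl 1, D2_fair hmod⟩, ?_⟩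
      rw [ncard_setOf_val (m+3) (fun i => i = 0 ∨ i % 3 = 1), card_filter_D2]
      omega
    apply le_antisymm
    · exact Nat.sInf_le hmem
    · apply le_csInf ⟨_, hmem⟩
      rintro b ⟨D, hD, rfl⟩
      have := (fd_lower D hD).2 hmod
      omega
end

section
/- If T is a tree of order n ≥ 2, then fd₁(T) ≤ n/2, with equality if and only if T is the corona of a tree. -/
open Set
set_option linter.unusedSectionVars false
set_option maxHeartbeats 1000000
open scoped Classical


namespace FD1


variable {V : Type*} [Fintype V] (T : SimpleGraph V)

/-- number of neighbors of `v` inside `D`. -/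
noncomputable def cnt (v : V) (D : Set V) : ℕ := (T.neighborSet v ∩ D).ncard

variable {T}

lemma cnt_empty (v : V) : cnt T v (∅ : Set V) = 0 := by
  simp [cnt]

lemma cnt_union (v : V) {D1 D2 : Set V} (h : Disjoint D1 D2) :
    cnt T v (D1 ∪ D2) = cnt T v D1 + cnt T v D2 := by
  unfold cnt
  rw [Set.inter_union_distrib_left]
  exact Set.ncard_union_eq (h.mono inter_subset_right inter_subset_right)
    (Set.toFinite _) (Set.toFinite _)

lemma cnt_eq_zero {v : V} {D : Set V} (h : ∀ u ∈ D, ¬ T.Adj v u) : cnt T v D = 0 := by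
  unfold cnt
  rw [Set.ncard_eq_zero (Set.toFinite _)]
  ext u; simp only [Set.mem_inter_iff, SimpleGraph.mem_neighborSet, Set.mem_empty_iff_false,
    iff_false, not_and]
  exact fun hadj hu => h u hu hadj

lemma cnt_pos_of_mem {v u : V} {D : Set V} (hadj : T.Adj v u) (hu : u ∈ D) : 0 < cnt T v D := by
  unfold cnt
  rw [Set.ncard_pos (Set.toFinite _)]
  exact ⟨u, hadj, hu⟩

lemma mem_of_cnt_eq_one {v u : V} {D : Set V} (h : cnt T v D = 1) (hadj : T.Adj v u)
    (hu : u ∈ D) : T.neighborSet v ∩ D = {u} := by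
  unfold cnt at h
  obtain ⟨a, ha⟩ := Set.ncard_eq_one.mp h
  have : u ∈ T.neighborSet v ∩ D := ⟨hadj, hu⟩
  rw [ha] at this ⊢
  simp_all

/-- fairness of `D` on territory `R`, excusing the root `r`. -/
def Fair (T : SimpleGraph V) (R : Set V) (r : V) (D : Set V) : Prop :=
  ∀ v ∈ R, v ∉ D → v ≠ r → cnt T v D = 1

/-- state A : root in `D`, fair elsewhere. -/
def StA (T : SimpleGraph V) (R : Set V) (r : V) (D : Set V) : Prop :=
  D ⊆ R ∧ r ∈ D ∧ Fair T R r D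

/-- state B : root outside `D` with exactly one `D`-neighbor. -/
def StB (T : SimpleGraph V) (R : Set V) (r : V) (D : Set V) : Prop :=
  D ⊆ R ∧ r ∉ D ∧ Fair T R r D ∧ cnt T r D = 1

/-- state C : root outside `D` with no `D`-neighbor. -/
def StC (T : SimpleGraph V) (R : Set V) (r : V) (D : Set V) : Prop :=
  D ⊆ R ∧ r ∉ D ∧ Fair T R r D ∧ cnt T r D = 0

/-- connectivity within a territory. -/
def ConnOn (T : SimpleGraph V) (R : Set V) : Prop :=
  ∀ u ∈ R, ∀ v ∈ R, ∃ w : T.Walk u v, ∀ x ∈ w.support, x ∈ R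

/-- relative corona structure : `L` is a set of pendant leaves matched to `R \ L`. -/
def IsCorOn (T : SimpleGraph V) (R : Set V) (L : Set V) : Prop :=
  L ⊆ R ∧ (∀ v ∈ R, v ∉ L → cnt T v L = 1) ∧
    (∀ l ∈ L, ∃ s, T.neighborSet l ∩ R = {s} ∧ s ∉ L)

/-- relative corona structure with the root's pendant missing. -/
def IsCorExc (T : SimpleGraph V) (R : Set V) (r : V) (L : Set V) : Prop :=
  L ⊆ R ∧ r ∉ L ∧ (∀ v ∈ R, v ∉ L → v ≠ r → cnt T v L = 1) ∧ cnt T r L = 0 ∧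
    (∀ l ∈ L, ∃ s, T.neighborSet l ∩ R = {s} ∧ s ∉ L)





lemma no_walk_avoiding (hacy : T.IsAcyclic) {r c : V} (hadj : T.Adj r c)
    (w : T.Walk c r) (hw : s(r, c) ∉ w.edges) : False := by
  classical
  have hpu := SimpleGraph.isAcyclic_iff_path_unique.mp hacy
  have key := hpu ⟨w.bypass, SimpleGraph.Walk.bypass_isPath w⟩ (SimpleGraph.Path.singleton hadj.symm)
  have hmem : s(r, c) ∈ w.bypass.edges := by
    have hh : w.bypass = (SimpleGraph.Path.singleton hadj.symm : T.Path c r).1 :=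
      congrArg Subtype.val key
    rw [hh]
    simp [SimpleGraph.Path.singleton, Sym2.eq_swap]
  exact hw (SimpleGraph.Walk.edges_bypass_subset w hmem)

/-- The splitting of a connected territory at an edge at the root. -/
lemma split (hacy : T.IsAcyclic) {R : Set V} (hR : ConnOn T R) {r c : V}
    (hr : r ∈ R) (hc : c ∈ R) (hadj : T.Adj r c) :
    ∃ R1 R2 : Set V, R1 ∪ R2 = R ∧ Disjoint R1 R2 ∧ r ∈ R1 ∧ c ∈ R2 ∧
      ConnOn T R1 ∧ ConnOn T R2 ∧
      (∀ u ∈ R1, ∀ v ∈ R2, T.Adj u v → u = r ∧ v = c) := by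
  classical
  set e : Sym2 V := s(r, c) with he
  let P : V → V → Prop := fun a v => ∃ w : T.Walk a v, (∀ x ∈ w.support, x ∈ R) ∧ e ∉ w.edges
  set R1 : Set V := {v | P r v} with hR1
  set R2 : Set V := {v | P c v} with hR2
  have hrR1 : r ∈ R1 := ⟨SimpleGraph.Walk.nil, by simpa using hr, by simp⟩
  have hcR2 : c ∈ R2 := ⟨SimpleGraph.Walk.nil, by simpa using hc, by simp⟩
  have hR1R : R1 ⊆ R := by
    rintro v ⟨w, hsup, -⟩; exact hsup v w.end_mem_support
  have hR2R : R2 ⊆ R := by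
    rintro v ⟨w, hsup, -⟩; exact hsup v w.end_mem_support
  have hdisj : Disjoint R1 R2 := by
    rw [Set.disjoint_left]
    rintro v ⟨w1, hs1, he1⟩ ⟨w2, hs2, he2⟩
    refine no_walk_avoiding hacy hadj (w2.append w1.reverse) ?_
    rw [SimpleGraph.Walk.edges_append]
    simp only [List.mem_append, SimpleGraph.Walk.edges_reverse, List.mem_reverse]
    rintro (h | h)
    · exact he2 h
    · exact he1 h
  -- extending a witness walk along a non-split edge
  have hext : ∀ (a0 a b : V), T.Adj a b → b ∈ R → s(a, b) ≠ e → P a0 a → P a0 b := by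
    rintro a0 a b hab hbR hee ⟨w, hsup, hew⟩
    refine ⟨w.concat hab, ?_, ?_⟩
    · intro x hx
      rw [SimpleGraph.Walk.support_concat] at hx
      rcases List.mem_append.mp hx with h | h
      · exact hsup x h
      · simp at h; subst h; exact hbR
    · rw [SimpleGraph.Walk.edges_concat, List.concat_eq_append]
      intro hcon
      rcases List.mem_append.mp hcon with h | h
      · exact hew h
      · simp at h; exact hee (h ▸ rfl)
  have hstep : ∀ a b : V, T.Adj a b → b ∈ R → a ∈ R1 ∪ R2 → b ∈ R1 ∪ R2 := by
    rintro a b hab hbR hmem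
    by_cases hee : s(a, b) = e
    · rw [he, Sym2.eq_iff] at hee
      rcases hee with ⟨rfl, rfl⟩ | ⟨rfl, rfl⟩
      · exact Or.inr hcR2
      · exact Or.inl hrR1
    · rcases hmem with h | h
      · exact Or.inl (hext r a b hab hbR hee h)
      · exact Or.inr (hext c a b hab hbR hee h)
  have hwalkstep : ∀ (a v : V) (w : T.Walk a v), (∀ x ∈ w.support, x ∈ R) →
      a ∈ R1 ∪ R2 → v ∈ R1 ∪ R2 := by
    intro a v w
    induction w with
    | nil => exact fun _ h => h
    | @cons x y z hxy p ih =>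
      intro hsup hx
      refine ih ?_ (hstep x y hxy (hsup y (by simp)) hx)
      intro t ht; exact hsup t (by simp [ht])
  have hunion : R1 ∪ R2 = R := by
    apply Set.Subset.antisymm (Set.union_subset hR1R hR2R)
    intro v hv
    obtain ⟨w, hsup⟩ := hR r hr v hv
    exact hwalkstep r v w hsup (Or.inl hrR1)
  -- supports of witnessing walks stay within their side
  have hsub1 : ∀ (v : V) (w : T.Walk r v), (∀ x ∈ w.support, x ∈ R) → e ∉ w.edges →
      ∀ x ∈ w.support, x ∈ R1 := by
    intro v w hsup hew x hx
    refine ⟨w.takeUntil x hx, fun t ht => hsup t ?_, fun hcon => hew ?_⟩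
    · exact SimpleGraph.Walk.support_takeUntil_subset w hx ht
    · exact SimpleGraph.Walk.edges_takeUntil_subset w hx hcon
  have hsub2 : ∀ (v : V) (w : T.Walk c v), (∀ x ∈ w.support, x ∈ R) → e ∉ w.edges →
      ∀ x ∈ w.support, x ∈ R2 := by
    intro v w hsup hew x hx
    refine ⟨w.takeUntil x hx, fun t ht => hsup t ?_, fun hcon => hew ?_⟩
    · exact SimpleGraph.Walk.support_takeUntil_subset w hx ht
    · exact SimpleGraph.Walk.edges_takeUntil_subset w hx hcon
  refine ⟨R1, R2, hunion, hdisj, hrR1, hcR2, ?_, ?_, ?_⟩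
  · intro u hu v hv
    obtain ⟨wu, hsu, heu⟩ := hu
    obtain ⟨wv, hsv, hev⟩ := hv
    refine ⟨wu.reverse.append wv, ?_⟩
    intro x hx
    rw [SimpleGraph.Walk.support_append] at hx
    rcases List.mem_append.mp hx with h | h
    · rw [SimpleGraph.Walk.support_reverse, List.mem_reverse] at h
      exact hsub1 u wu hsu heu x h
    · exact hsub1 v wv hsv hev x (List.mem_of_mem_tail h)
  · intro u hu v hv
    obtain ⟨wu, hsu, heu⟩ := hu
    obtain ⟨wv, hsv, hev⟩ := hv
    refine ⟨wu.reverse.append wv, ?_⟩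
    intro x hx
    rw [SimpleGraph.Walk.support_append] at hx
    rcases List.mem_append.mp hx with h | h
    · rw [SimpleGraph.Walk.support_reverse, List.mem_reverse] at h
      exact hsub2 u wu hsu heu x h
    · exact hsub2 v wv hsv hev x (List.mem_of_mem_tail h)
  · intro u hu v hv huv
    by_cases hee : s(u, v) = e
    · rw [he, Sym2.eq_iff] at hee
      rcases hee with ⟨rfl, rfl⟩ | ⟨rfl, rfl⟩
      · exact ⟨rfl, rfl⟩
      · exact absurd hu (fun h => (Set.disjoint_left.mp hdisj h) hcR2)
    · exfalso
      have : v ∈ R1 := hext r u v huv (hR2R hv) hee hu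
      exact (Set.disjoint_left.mp hdisj this) hv
lemma mem_R_of_R1' {V : Type*} {R R1 R2 : Set V} (hun : R1 ∪ R2 = R) {v : V} (hv : v ∈ R1) :
    v ∈ R := hun ▸ Or.inl hv
lemma mem_R_of_R2' {V : Type*} {R R1 R2 : Set V} (hun : R1 ∪ R2 = R) {v : V} (hv : v ∈ R2) :
    v ∈ R := hun ▸ Or.inr hv
section GLUE
variable {V : Type*} [Fintype V] {T : SimpleGraph V}
variable {R R1 R2 : Set V} {r c : V} {D1 D2 : Set V}

lemma cnt2_of_ne (hcross : ∀ u ∈ R1, ∀ v ∈ R2, T.Adj u v → u = r ∧ v = c)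
    (hD2 : D2 ⊆ R2) {v : V} (hv : v ∈ R1) (hvr : v ≠ r) : cnt T v D2 = 0 :=
  cnt_eq_zero fun u hu h => hvr (hcross v hv u (hD2 hu) h).1

lemma cnt1_of_ne (hcross : ∀ u ∈ R1, ∀ v ∈ R2, T.Adj u v → u = r ∧ v = c)
    (hD1 : D1 ⊆ R1) {v : V} (hv : v ∈ R2) (hvc : v ≠ c) : cnt T v D1 = 0 :=
  cnt_eq_zero fun u hu h => hvc (hcross u (hD1 hu) v hv h.symm).2

lemma cnt2_root (hr1 : r ∈ R1) (hcross : ∀ u ∈ R1, ∀ v ∈ R2, T.Adj u v → u = r ∧ v = c)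
    (hD2 : D2 ⊆ R2) (hadj : T.Adj r c) :
    cnt T r D2 = if c ∈ D2 then 1 else 0 := by
  split_ifs with hcD
  · have : T.neighborSet r ∩ D2 = {c} := by
      ext u
      simp only [Set.mem_inter_iff, SimpleGraph.mem_neighborSet, Set.mem_singleton_iff]
      exact ⟨fun ⟨h, hu⟩ => (hcross r hr1 u (hD2 hu) h).2, fun h => h ▸ ⟨hadj, hcD⟩⟩
    simp [cnt, this]
  · exact cnt_eq_zero fun u hu h => hcD ((hcross r hr1 u (hD2 hu) h).2 ▸ hu)

lemma cnt1_root (hc2 : c ∈ R2) (hcross : ∀ u ∈ R1, ∀ v ∈ R2, T.Adj u v → u = r ∧ v = c)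
    (hD1 : D1 ⊆ R1) (hadj : T.Adj r c) :
    cnt T c D1 = if r ∈ D1 then 1 else 0 := by
  split_ifs with hrD
  · have : T.neighborSet c ∩ D1 = {r} := by
      ext u
      simp only [Set.mem_inter_iff, SimpleGraph.mem_neighborSet, Set.mem_singleton_iff]
      exact ⟨fun ⟨h, hu⟩ => (hcross u (hD1 hu) c hc2 h.symm).1, fun h => h ▸ ⟨hadj.symm, hrD⟩⟩
    simp [cnt, this]
  · exact cnt_eq_zero fun u hu h => hrD ((hcross u (hD1 hu) c hc2 h.symm).1 ▸ hu)

/-- fairness gluing. -/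
lemma fair_glue (hun : R1 ∪ R2 = R) (hdisj : Disjoint R1 R2) (hr1 : r ∈ R1) (hc2 : c ∈ R2)
    (hadj : T.Adj r c) (hcross : ∀ u ∈ R1, ∀ v ∈ R2, T.Adj u v → u = r ∧ v = c)
    (hD1 : D1 ⊆ R1) (hD2 : D2 ⊆ R2)
    (f1 : Fair T R1 r D1) (f2 : Fair T R2 c D2)
    (hcc : c ∈ D2 ∨ (if r ∈ D1 then 1 else 0) + cnt T c D2 = 1) :
    Fair T R r (D1 ∪ D2) := by
  intro v hv hvD hvr
  have hv12 : v ∈ R1 ∪ R2 := hun ▸ hv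
  have hd : Disjoint D1 D2 := hdisj.mono hD1 hD2
  rcases hv12 with hv1 | hv2
  · rw [cnt_union v hd, cnt2_of_ne hcross hD2 hv1 hvr]
    simpa using f1 v hv1 (fun h => hvD (Or.inl h)) hvr
  · by_cases hvc : v = c
    · subst hvc
      rcases hcc with h | h
      · exact absurd (Or.inr h) hvD
      · rw [cnt_union v hd, cnt1_root hc2 hcross hD1 hadj]
        omega
    · rw [cnt_union v hd, cnt1_of_ne hcross hD1 hv2 hvc]
      simpa using f2 v hv2 (fun h => hvD (Or.inr h)) hvc

section UPGLUE
variable (hun : R1 ∪ R2 = R) (hdisj : Disjoint R1 R2) (hr1 : r ∈ R1) (hc2 : c ∈ R2)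
  (hadj : T.Adj r c) (hcross : ∀ u ∈ R1, ∀ v ∈ R2, T.Adj u v → u = r ∧ v = c)

include hun hdisj hr1 hc2 hadj hcross

lemma glue_AA (h1 : StA T R1 r D1) (h2 : StA T R2 c D2) : StA T R r (D1 ∪ D2) := by
  obtain ⟨s1, m1, f1⟩ := h1; obtain ⟨s2, m2, f2⟩ := h2
  exact ⟨hun ▸ Set.union_subset_union s1 s2, Or.inl m1,
    fair_glue hun hdisj hr1 hc2 hadj hcross s1 s2 f1 f2 (Or.inl m2)⟩

lemma glue_AC (h1 : StA T R1 r D1) (h2 : StC T R2 c D2) : StA T R r (D1 ∪ D2) := by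
  obtain ⟨s1, m1, f1⟩ := h1; obtain ⟨s2, m2, f2, z2⟩ := h2
  refine ⟨hun ▸ Set.union_subset_union s1 s2, Or.inl m1,
    fair_glue hun hdisj hr1 hc2 hadj hcross s1 s2 f1 f2 (Or.inr ?_)⟩
  simp [m1, z2]

lemma glue_BB (h1 : StB T R1 r D1) (h2 : StB T R2 c D2) : StB T R r (D1 ∪ D2) := by
  obtain ⟨s1, m1, f1, o1⟩ := h1; obtain ⟨s2, m2, f2, o2⟩ := h2
  have hd : Disjoint D1 D2 := hdisj.mono s1 s2
  refine ⟨hun ▸ Set.union_subset_union s1 s2, ?_, 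
    fair_glue hun hdisj hr1 hc2 hadj hcross s1 s2 f1 f2 (Or.inr ?_), ?_⟩
  · rintro (h | h)
    · exact m1 h
    · exact Set.disjoint_left.mp hdisj hr1 (s2 h)
  · have : r ∉ D1 := m1
    simp [this, o2]
  · rw [cnt_union r hd, cnt2_root hr1 hcross s2 hadj]
    simp [m2, o1]

lemma glue_CA (h1 : StC T R1 r D1) (h2 : StA T R2 c D2) : StB T R r (D1 ∪ D2) := by
  obtain ⟨s1, m1, f1, z1⟩ := h1; obtain ⟨s2, m2, f2⟩ := h2
  have hd : Disjoint D1 D2 := hdisj.mono s1 s2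
  refine ⟨hun ▸ Set.union_subset_union s1 s2, ?_,
    fair_glue hun hdisj hr1 hc2 hadj hcross s1 s2 f1 f2 (Or.inl m2), ?_⟩
  · rintro (h | h)
    · exact m1 h
    · exact Set.disjoint_left.mp hdisj hr1 (s2 h)
  · rw [cnt_union r hd, cnt2_root hr1 hcross s2 hadj]
    simp [m2, z1]

lemma glue_CB (h1 : StC T R1 r D1) (h2 : StB T R2 c D2) : StC T R r (D1 ∪ D2) := by
  obtain ⟨s1, m1, f1, z1⟩ := h1; obtain ⟨s2, m2, f2, o2⟩ := h2
  have hd : Disjoint D1 D2 := hdisj.mono s1 s2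
  refine ⟨hun ▸ Set.union_subset_union s1 s2, ?_,
    fair_glue hun hdisj hr1 hc2 hadj hcross s1 s2 f1 f2 (Or.inr ?_), ?_⟩
  · rintro (h | h)
    · exact m1 h
    · exact Set.disjoint_left.mp hdisj hr1 (s2 h)
  · have : r ∉ D1 := m1
    simp [this, o2]
  · rw [cnt_union r hd, cnt2_root hr1 hcross s2 hadj]
    simp [m2, z1]

-- decomposition lemmas
lemma decomp_fair1 {D : Set V} (hD : D ⊆ R) (f : Fair T R r D) :
    Fair T R1 r (D ∩ R1) := by
  intro v hv hvD hvr
  have hvD' : v ∉ D := fun h => hvD ⟨h, hv⟩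
  have e1 : D = (D ∩ R1) ∪ (D ∩ R2) := by
    rw [← Set.inter_union_distrib_left, hun]
    exact (Set.inter_eq_self_of_subset_left hD).symm
  have := f v (mem_R_of_R1' hun hv) hvD' hvr
  rw [e1, cnt_union v ((hdisj.mono inter_subset_right inter_subset_right)),
    cnt2_of_ne hcross inter_subset_right hv hvr] at this
  simpa using this

lemma decomp_fair2 {D : Set V} (hD : D ⊆ R) (f : Fair T R r D) :
    Fair T R2 c (D ∩ R2) := by
  intro v hv hvD hvc
  have hvD' : v ∉ D := fun h => hvD ⟨h, hv⟩
  have e1 : D = (D ∩ R1) ∪ (D ∩ R2) := by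
    rw [← Set.inter_union_distrib_left, hun]
    exact (Set.inter_eq_self_of_subset_left hD).symm
  have hvr : v ≠ r := fun h => Set.disjoint_left.mp hdisj hr1 (h ▸ hv)
  have := f v (mem_R_of_R2' hun hv) hvD' hvr
  rw [e1, cnt_union v ((hdisj.mono inter_subset_right inter_subset_right)),
    cnt1_of_ne hcross inter_subset_right hv hvc] at this
  simpa using this

end UPGLUE
end GLUE

section DOWN
variable {V : Type*} [Fintype V] {T : SimpleGraph V}
variable {R R1 R2 : Set V} {r c : V} {D : Set V}
variable (hun : R1 ∪ R2 = R) (hdisj : Disjoint R1 R2) (hr1 : r ∈ R1) (hc2 : c ∈ R2)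
  (hadj : T.Adj r c) (hcross : ∀ u ∈ R1, ∀ v ∈ R2, T.Adj u v → u = r ∧ v = c)

include hun hdisj hr1 hc2 hadj hcross

lemma decomp_eq (hD : D ⊆ R) : (D ∩ R1) ∪ (D ∩ R2) = D := by
  rw [← Set.inter_union_distrib_left, hun]
  exact Set.inter_eq_self_of_subset_left hD

lemma decomp_cnt_r (hD : D ⊆ R) :
    cnt T r D = cnt T r (D ∩ R1) + (if c ∈ D then 1 else 0) := by
  conv_lhs => rw [← decomp_eq hun hdisj hr1 hc2 hadj hcross hD]
  rw [cnt_union r (hdisj.mono inter_subset_right inter_subset_right),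
    cnt2_root hr1 hcross inter_subset_right hadj]
  congr 1
  by_cases h : c ∈ D <;> simp [h, hc2]

lemma decomp_cnt_c (hD : D ⊆ R) :
    cnt T c D = (if r ∈ D then 1 else 0) + cnt T c (D ∩ R2) := by
  conv_lhs => rw [← decomp_eq hun hdisj hr1 hc2 hadj hcross hD]
  rw [cnt_union c (hdisj.mono inter_subset_right inter_subset_right),
    cnt1_root hc2 hcross inter_subset_right hadj]
  congr 1
  by_cases h : r ∈ D <;> simp [h, hr1]

lemma decomp_A (h : StA T R r D) :
    StA T R1 r (D ∩ R1) ∧ (StA T R2 c (D ∩ R2) ∨ StC T R2 c (D ∩ R2)) := by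
  obtain ⟨hD, hrD, f⟩ := h
  have f1 := decomp_fair1 hun hdisj hr1 hc2 hadj hcross hD f
  have f2 := decomp_fair2 hun hdisj hr1 hc2 hadj hcross hD f
  refine ⟨⟨inter_subset_right, ⟨hrD, hr1⟩, f1⟩, ?_⟩
  by_cases hcD : c ∈ D
  · exact Or.inl ⟨inter_subset_right, ⟨hcD, hc2⟩, f2⟩
  · refine Or.inr ⟨inter_subset_right, fun h => hcD h.1, f2, ?_⟩
    have hcr : c ≠ r := hadj.ne'
    have := f c (mem_R_of_R2' hun hc2) hcD hcr
    rw [decomp_cnt_c hun hdisj hr1 hc2 hadj hcross hD] at this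
    simp [hrD] at this
    omega

lemma decomp_B (h : StB T R r D) :
    (StB T R1 r (D ∩ R1) ∧ StB T R2 c (D ∩ R2)) ∨
      (StC T R1 r (D ∩ R1) ∧ StA T R2 c (D ∩ R2)) := by
  obtain ⟨hD, hrD, f, o⟩ := h
  have f1 := decomp_fair1 hun hdisj hr1 hc2 hadj hcross hD f
  have f2 := decomp_fair2 hun hdisj hr1 hc2 hadj hcross hD f
  have hcr : c ≠ r := hadj.ne'
  have hor := decomp_cnt_r hun hdisj hr1 hc2 hadj hcross hD
  rw [o] at hor
  by_cases hcD : c ∈ D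
  · refine Or.inr ⟨⟨inter_subset_right, fun h => hrD h.1, f1, ?_⟩,
      ⟨inter_subset_right, ⟨hcD, hc2⟩, f2⟩⟩
    simp [hcD] at hor
    omega
  · have hoc := f c (mem_R_of_R2' hun hc2) hcD hcr
    rw [decomp_cnt_c hun hdisj hr1 hc2 hadj hcross hD] at hoc
    simp [hrD] at hoc
    refine Or.inl ⟨⟨inter_subset_right, fun h => hrD h.1, f1, ?_⟩,
      ⟨inter_subset_right, fun h => hcD h.1, f2, ?_⟩⟩
    · simp [hcD] at hor
      omega
    · omega

lemma decomp_C (h : StC T R r D) :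
    StC T R1 r (D ∩ R1) ∧ StB T R2 c (D ∩ R2) := by
  obtain ⟨hD, hrD, f, o⟩ := h
  have f1 := decomp_fair1 hun hdisj hr1 hc2 hadj hcross hD f
  have f2 := decomp_fair2 hun hdisj hr1 hc2 hadj hcross hD f
  have hcr : c ≠ r := hadj.ne'
  have hor := decomp_cnt_r hun hdisj hr1 hc2 hadj hcross hD
  rw [o] at hor
  have hcD : c ∉ D := by
    intro h
    simp [h] at hor
  have hoc := f c (mem_R_of_R2' hun hc2) hcD hcr
  rw [decomp_cnt_c hun hdisj hr1 hc2 hadj hcross hD] at hoc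
  simp [hrD] at hoc
  refine ⟨⟨inter_subset_right, fun h => hrD h.1, f1, ?_⟩,
    ⟨inter_subset_right, fun h => hcD h.1, f2, ?_⟩⟩
  · simp [hcD] at hor
    omega
  · omega

-- size bookkeeping
lemma decomp_ncard (hD : D ⊆ R) :
    (D ∩ R1).ncard + (D ∩ R2).ncard = D.ncard := by
  rw [← Set.ncard_union_eq (hdisj.mono inter_subset_right inter_subset_right)
    (Set.toFinite _) (Set.toFinite _), decomp_eq hun hdisj hr1 hc2 hadj hcross hD]

lemma union_ncard {A B : Set V} (hA : A ⊆ R1) (hB : B ⊆ R2) :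
    (A ∪ B).ncard = A.ncard + B.ncard :=
  Set.ncard_union_eq (hdisj.mono hA hB) (Set.toFinite _) (Set.toFinite _)

lemma R_ncard : R1.ncard + R2.ncard = R.ncard := by
  rw [← Set.ncard_union_eq hdisj (Set.toFinite _) (Set.toFinite _), hun]

end DOWN

section CORGLUE
variable {V : Type*} [Fintype V] {T : SimpleGraph V}
variable {R R1 R2 : Set V} {r c : V} {L1 L2 : Set V}
variable (hun : R1 ∪ R2 = R) (hdisj : Disjoint R1 R2) (hr1 : r ∈ R1) (hc2 : c ∈ R2)
  (hadj : T.Adj r c) (hcross : ∀ u ∈ R1, ∀ v ∈ R2, T.Adj u v → u = r ∧ v = c)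

include hun hdisj hr1 hc2 hadj hcross

lemma nbr_inter_R1 {v : V} (hv : v ∈ R1) (hvr : v ≠ r) :
    T.neighborSet v ∩ R = T.neighborSet v ∩ R1 := by
  ext u
  simp only [Set.mem_inter_iff, SimpleGraph.mem_neighborSet]
  refine ⟨fun ⟨h, hu⟩ => ⟨h, ?_⟩, fun ⟨h, hu⟩ => ⟨h, mem_R_of_R1' hun hu⟩⟩
  rcases hun ▸ hu with h1 | h2
  · exact h1
  · exact absurd (hcross v hv u h2 h).1 hvr

lemma nbr_inter_R2 {v : V} (hv : v ∈ R2) (hvc : v ≠ c) :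
    T.neighborSet v ∩ R = T.neighborSet v ∩ R2 := by
  ext u
  simp only [Set.mem_inter_iff, SimpleGraph.mem_neighborSet]
  refine ⟨fun ⟨h, hu⟩ => ⟨h, ?_⟩, fun ⟨h, hu⟩ => ⟨h, mem_R_of_R2' hun hu⟩⟩
  rcases hun ▸ hu with h1 | h2
  · exact absurd (hcross u h1 v hv h.symm).2 hvc
  · exact h2

lemma nbr_r_singleton (hR1 : R1 = {r}) : T.neighborSet r ∩ R = {c} := by
  ext u
  simp only [Set.mem_inter_iff, SimpleGraph.mem_neighborSet, Set.mem_singleton_iff]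
  constructor
  · rintro ⟨h, hu⟩
    rcases hun ▸ hu with h1 | h2
    · exact absurd (hR1 ▸ h1 : u ∈ ({r} : Set V)) (by simpa using h.ne')
    · exact (hcross r hr1 u h2 h).2
  · rintro rfl; exact ⟨hadj, mem_R_of_R2' hun hc2⟩

lemma nbr_c_singleton (hR2 : R2 = {c}) : T.neighborSet c ∩ R = {r} := by
  ext u
  simp only [Set.mem_inter_iff, SimpleGraph.mem_neighborSet, Set.mem_singleton_iff]
  constructor
  · rintro ⟨h, hu⟩
    rcases hun ▸ hu with h1 | h2
    · exact (hcross u h1 c hc2 h.symm).1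
    · exact absurd (hR2 ▸ h2 : u ∈ ({c} : Set V)) (by simpa using h.ne')
  · rintro rfl; exact ⟨hadj.symm, mem_R_of_R1' hun hr1⟩

/-- glue (a) : corona-minus-pendant on the root side + corona on the other side. -/
lemma corglue_a (h1 : IsCorExc T R1 r L1) (h2 : IsCorOn T R2 L2) (hc : c ∉ L2) :
    IsCorExc T R r (L1 ∪ L2) := by
  obtain ⟨hL1, hrL1, f1, z1, leaf1⟩ := h1
  obtain ⟨hL2, f2, leaf2⟩ := h2
  have hd : Disjoint L1 L2 := hdisj.mono hL1 hL2
  refine ⟨hun ▸ Set.union_subset_union hL1 hL2,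
    fun h => h.elim (fun h1 => hrL1 h1) (fun h2 => Set.disjoint_left.mp hdisj hr1 (hL2 h2)), ?_, ?_, ?_⟩
  · intro v hv hvL hvr
    rcases hun ▸ hv with hv1 | hv2
    · rw [cnt_union v hd, cnt2_of_ne hcross hL2 hv1 hvr]
      simpa using f1 v hv1 (fun h => hvL (Or.inl h)) hvr
    · by_cases hvc : v = c
      · rw [cnt_union v hd, hvc, cnt1_root hc2 hcross hL1 hadj]
        simp only [hrL1, if_false]
        have := f2 v hv2 (fun h => hvL (Or.inr h))
        rw [hvc] at this
        simpa using this
      · rw [cnt_union v hd, cnt1_of_ne hcross hL1 hv2 hvc]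
        simpa using f2 v hv2 (fun h => hvL (Or.inr h))
  · rw [cnt_union r hd, cnt2_root hr1 hcross hL2 hadj, z1]
    simp [hc]
  · intro l hl
    rcases hl with hl1 | hl2
    · obtain ⟨s, hs, hsL⟩ := leaf1 l hl1
      have hlr : l ≠ r := fun h => hrL1 (h ▸ hl1)
      refine ⟨s, by rw [nbr_inter_R1 hun hdisj hr1 hc2 hadj hcross (hL1 hl1) hlr, hs], ?_⟩
      rintro (h | h)
      · exact hsL h
      · have hsR1 : s ∈ R1 := by
          have : s ∈ T.neighborSet l ∩ R1 := by rw [hs]; rfl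
          exact this.2
        exact Set.disjoint_left.mp hdisj hsR1 (hL2 h)
    · obtain ⟨s, hs, hsL⟩ := leaf2 l hl2
      have hlc : l ≠ c := fun h => hc (h ▸ hl2)
      refine ⟨s, by rw [nbr_inter_R2 hun hdisj hr1 hc2 hadj hcross (hL2 hl2) hlc, hs], ?_⟩
      rintro (h | h)
      · have hsR2 : s ∈ R2 := by
          have : s ∈ T.neighborSet l ∩ R2 := by rw [hs]; rfl
          exact this.2
        exact Set.disjoint_left.mp hdisj (hL1 h) hsR2
      · exact hsL h
end CORGLUE

section CORGLUE2
variable {V : Type*} [Fintype V] {T : SimpleGraph V}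
variable {R R1 R2 : Set V} {r c : V} {L1 L2 : Set V}
variable (hun : R1 ∪ R2 = R) (hdisj : Disjoint R1 R2) (hr1 : r ∈ R1) (hc2 : c ∈ R2)
  (hadj : T.Adj r c) (hcross : ∀ u ∈ R1, ∀ v ∈ R2, T.Adj u v → u = r ∧ v = c)

include hun hdisj hr1 hc2 hadj hcross

/-- glue (b) : corona-minus-pendant on root side + singleton: the singleton becomes the pendant. -/
lemma corglue_b (h1 : IsCorExc T R1 r L1) (hR2 : R2 = {c}) :
    IsCorOn T R (L1 ∪ {c}) ∧ r ∉ L1 ∪ {c} := by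
  obtain ⟨hL1, hrL1, f1, z1, leaf1⟩ := h1
  have hcr : c ≠ r := hadj.ne'
  have hrL : r ∉ L1 ∪ {c} := by simp [hrL1, hcr.symm]
  have hd : Disjoint L1 ({c} : Set V) := hdisj.mono hL1 (by simp [hc2])
  refine ⟨⟨hun ▸ Set.union_subset_union hL1 (by simp [hc2]), ?_, ?_⟩, hrL⟩
  · intro v hv hvL
    rcases hun ▸ hv with hv1 | hv2
    · by_cases hvr : v = r
      · rw [cnt_union v hd, hvr, z1, cnt2_root hr1 hcross (D2 := ({c} : Set V)) (by simp [hc2]) hadj]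
        simp
      · rw [cnt_union v hd, cnt2_of_ne hcross (D2 := ({c} : Set V)) (by simp [hc2]) hv1 hvr]
        simpa using f1 v hv1 (fun h => hvL (Or.inl h)) hvr
    · exact absurd (hR2 ▸ hv2 : v ∈ ({c} : Set V)) (fun h => hvL (Or.inr h))
  · intro l hl
    rcases hl with hl1 | hlc
    · obtain ⟨s, hs, hsL⟩ := leaf1 l hl1
      have hlr : l ≠ r := fun h => hrL1 (h ▸ hl1)
      have hsR1 : s ∈ R1 := by
        have : s ∈ T.neighborSet l ∩ R1 := by rw [hs]; exact rfl
        exact this.2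
      refine ⟨s, by rw [nbr_inter_R1 hun hdisj hr1 hc2 hadj hcross (hL1 hl1) hlr, hs], ?_⟩
      rintro (h | h)
      · exact hsL h
      · simp at h
        subst h
        exact Set.disjoint_left.mp hdisj hsR1 hc2
    · simp at hlc
      subst hlc
      refine ⟨r, nbr_c_singleton hun hdisj hr1 hc2 hadj hcross hR2, hrL⟩

/-- glue (b') : singleton root side + corona-minus-pendant on the other side. -/
lemma corglue_b' (h2 : IsCorExc T R2 c L2) (hR1 : R1 = {r}) :
    IsCorOn T R (L2 ∪ {r}) := by
  obtain ⟨hL2, hcL2, f2, z2, leaf2⟩ := h2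
  have hcr : c ≠ r := hadj.ne'
  have hd' : Disjoint ({r} : Set V) L2 := hdisj.mono (by simp [hr1]) hL2
  have hd : Disjoint L2 ({r} : Set V) := hd'.symm
  refine ⟨hun ▸ (by rw [Set.union_comm R1 R2]; exact Set.union_subset_union hL2 (by simp [hr1])), ?_, ?_⟩
  · intro v hv hvL
    rcases hun ▸ hv with hv1 | hv2
    · exact absurd (hR1 ▸ hv1 : v ∈ ({r} : Set V)) (fun h => hvL (Or.inr h))
    · by_cases hvc : v = c
      · rw [cnt_union v hd, hvc, z2, cnt1_root hc2 hcross (D1 := ({r} : Set V)) (by simp [hr1]) hadj]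
        simp
      · rw [cnt_union v hd, cnt1_of_ne hcross (D1 := ({r} : Set V)) (by simp [hr1]) hv2 hvc]
        simpa using f2 v hv2 (fun h => hvL (Or.inl h)) hvc
  · intro l hl
    rcases hl with hl2 | hlr
    · obtain ⟨s, hs, hsL⟩ := leaf2 l hl2
      have hlc : l ≠ c := fun h => hcL2 (h ▸ hl2)
      have hsR2 : s ∈ R2 := by
        have : s ∈ T.neighborSet l ∩ R2 := by rw [hs]; exact rfl
        exact this.2
      refine ⟨s, by rw [nbr_inter_R2 hun hdisj hr1 hc2 hadj hcross (hL2 hl2) hlc, hs], ?_⟩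
      rintro (h | h)
      · exact hsL h
      · simp at h
        rw [h] at hsR2
        exact Set.disjoint_left.mp hdisj hr1 hsR2
    · simp at hlr
      subst hlr
      refine ⟨c, nbr_r_singleton hun hdisj hr1 hc2 hadj hcross hR1, ?_⟩
      rintro (h | h)
      · exact hcL2 h
      · simp at h; exact hcr h

/-- glue (c) : corona structures on both sides, roots not leaves. -/
lemma corglue_c (h1 : IsCorOn T R1 L1) (hr : r ∉ L1) (h2 : IsCorOn T R2 L2) (hc : c ∉ L2) :
    IsCorOn T R (L1 ∪ L2) ∧ r ∉ L1 ∪ L2 := by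
  obtain ⟨hL1, f1, leaf1⟩ := h1
  obtain ⟨hL2, f2, leaf2⟩ := h2
  have hd : Disjoint L1 L2 := hdisj.mono hL1 hL2
  have hrL : r ∉ L1 ∪ L2 := by
    rintro (h | h)
    · exact hr h
    · exact Set.disjoint_left.mp hdisj hr1 (hL2 h)
  refine ⟨⟨hun ▸ Set.union_subset_union hL1 hL2, ?_, ?_⟩, hrL⟩
  · intro v hv hvL
    rcases hun ▸ hv with hv1 | hv2
    · by_cases hvr : v = r
      · subst hvr
        rw [cnt_union v hd, cnt2_root hr1 hcross hL2 hadj]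
        simp only [hc, if_false]
        simpa using f1 v hv1 (fun h => hvL (Or.inl h))
      · rw [cnt_union v hd, cnt2_of_ne hcross hL2 hv1 hvr]
        simpa using f1 v hv1 (fun h => hvL (Or.inl h))
    · by_cases hvc : v = c
      · subst hvc
        rw [cnt_union v hd, cnt1_root hc2 hcross hL1 hadj]
        simp only [hr, if_false]
        simpa using f2 v hv2 (fun h => hvL (Or.inr h))
      · rw [cnt_union v hd, cnt1_of_ne hcross hL1 hv2 hvc]
        simpa using f2 v hv2 (fun h => hvL (Or.inr h))
  · intro l hl
    rcases hl with hl1 | hl2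
    · obtain ⟨s, hs, hsL⟩ := leaf1 l hl1
      have hlr : l ≠ r := fun h => hr (h ▸ hl1)
      have hsR1 : s ∈ R1 := by
        have : s ∈ T.neighborSet l ∩ R1 := by rw [hs]; exact rfl
        exact this.2
      refine ⟨s, by rw [nbr_inter_R1 hun hdisj hr1 hc2 hadj hcross (hL1 hl1) hlr, hs], ?_⟩
      rintro (h | h)
      · exact hsL h
      · exact Set.disjoint_left.mp hdisj hsR1 (hL2 h)
    · obtain ⟨s, hs, hsL⟩ := leaf2 l hl2
      have hlc : l ≠ c := fun h => hc (h ▸ hl2)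
      have hsR2 : s ∈ R2 := by
        have : s ∈ T.neighborSet l ∩ R2 := by rw [hs]; exact rfl
        exact this.2
      refine ⟨s, by rw [nbr_inter_R2 hun hdisj hr1 hc2 hadj hcross (hL2 hl2) hlc, hs], ?_⟩
      rintro (h | h)
      · exact Set.disjoint_left.mp hdisj (hL1 h) hsR2
      · exact hsL h
end CORGLUE2

section MAIN
variable {V : Type*} [Fintype V] {T : SimpleGraph V}

/-- the full inductive invariant package for a rooted territory. -/
structure Good (T : SimpleGraph V) (R : Set V) (r : V) : Prop where
  n1 : ∃ D, StA T R r D ∧ 2 * D.ncard ≤ R.ncard + 1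
  n2 : (∃ D, StC T R r D) → ∃ D, StC T R r D ∧ 2 * D.ncard + 1 ≤ R.ncard
  n3 : (¬ ∃ D, StC T R r D) → ∃ D, StA T R r D ∧ 2 * D.ncard ≤ R.ncard
  n4 : (∃ D, StB T R r D) → ∃ D, StB T R r D ∧ 2 * D.ncard ≤ R.ncard
  n5 : (¬ ∃ D, StB T R r D) → ∃ D, (StA T R r D ∨ StC T R r D) ∧ 2 * D.ncard + 1 ≤ R.ncard
  n6 : 2 ≤ R.ncard → (¬ ∃ D, StB T R r D) → ∃ D, StA T R r D ∧ 2 * D.ncard ≤ R.ncard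
  n7 : 2 ≤ R.ncard → ∃ D, (StA T R r D ∨ StB T R r D) ∧ 2 * D.ncard ≤ R.ncard
  k1 : (∀ D, StA T R r D → R.ncard + 1 ≤ 2 * D.ncard) →
       (∀ D, StC T R r D → R.ncard ≤ 2 * D.ncard + 2) → ∃ L, IsCorExc T R r L
  k2 : 2 ≤ R.ncard → (∀ D, StB T R r D → R.ncard ≤ 2 * D.ncard) →
       (∀ D, StA T R r D ∨ StC T R r D → R.ncard ≤ 2 * D.ncard) →
       ∃ L, IsCorOn T R L ∧ r ∉ L
  k3 : 2 ≤ R.ncard → (∀ D, StA T R r D ∨ StB T R r D → R.ncard ≤ 2 * D.ncard) →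
       ∃ L, IsCorOn T R L

lemma good_M {R : Set V} {r : V} (g : Good T R r) :
    ∃ D, (StA T R r D ∨ StC T R r D) ∧ 2 * D.ncard ≤ R.ncard := by
  by_cases h : ∃ D, StC T R r D
  · obtain ⟨D, hD, hb⟩ := g.n2 h; exact ⟨D, Or.inr hD, by omega⟩
  · obtain ⟨D, hD, hb⟩ := g.n3 h; exact ⟨D, Or.inl hD, hb⟩

lemma stA_total {R : Set V} {r : V} (hr : r ∈ R) : StA T R r R :=
  ⟨le_rfl, hr, fun v hv hvD _ => (hvD hv).elim⟩

lemma good_singleton (r : V) : Good T {r} r := by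
  have hcard : ({r} : Set V).ncard = 1 := Set.ncard_singleton r
  have hA : StA T {r} r {r} ∧ 2 * ({r} : Set V).ncard ≤ ({r} : Set V).ncard + 1 := by
    refine ⟨⟨le_rfl, rfl, ?_⟩, by rw [hcard]⟩
    intro v hv hvD hvr
    exact (hvD hv).elim
  have hC : StC T {r} r ∅ ∧ 2 * (∅ : Set V).ncard + 1 ≤ ({r} : Set V).ncard := by
    refine ⟨⟨Set.empty_subset _, by simp, ?_, cnt_empty r⟩, by simp [hcard]⟩
    intro v hv hvD hvr
    simp at hv
    exact (hvr hv).elim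
  have hnoB : ¬ ∃ D, StB T {r} r D := by
    rintro ⟨D, hD, hrD, -, ho⟩
    rcases Set.subset_singleton_iff_eq.mp hD with rfl | rfl
    · rw [cnt_empty] at ho; omega
    · exact hrD rfl
  refine ⟨⟨{r}, hA⟩, fun _ => ⟨∅, hC⟩, fun h => absurd ⟨∅, hC.1⟩ h,
    fun h => (hnoB h).elim, fun _ => ⟨∅, Or.inr hC.1, by simp [hcard]⟩,
    fun h2 _ => by omega, fun h2 => by omega, fun _ _ => ⟨∅, ?_⟩,
    fun h2 _ _ => by omega, fun h2 _ => by omega⟩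
  refine ⟨Set.empty_subset _, by simp, fun v hv hvL hvr => ?_, cnt_empty r,
    fun l hl => absurd hl (by simp)⟩
  simp at hv
  exact (hvr hv).elim

end MAIN

section STEP
variable {V : Type*} [Fintype V] {T : SimpleGraph V}
variable {R R1 R2 : Set V} {r c : V}

lemma good_step (hun : R1 ∪ R2 = R) (hdisj : Disjoint R1 R2) (hr1 : r ∈ R1) (hc2 : c ∈ R2)
    (hadj : T.Adj r c) (hcross : ∀ u ∈ R1, ∀ v ∈ R2, T.Adj u v → u = r ∧ v = c)
    (G1 : Good T R1 r) (G2 : Good T R2 c) : Good T R r := by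
  have hnn : R1.ncard + R2.ncard = R.ncard := R_ncard hun hdisj hr1 hc2 hadj hcross
  have hn1pos : 1 ≤ R1.ncard := (Set.ncard_pos (Set.toFinite _)).mpr ⟨r, hr1⟩
  have hn2pos : 1 ≤ R2.ncard := (Set.ncard_pos (Set.toFinite _)).mpr ⟨c, hc2⟩
  have hsz : ∀ {A B : Set V}, A ⊆ R1 → B ⊆ R2 → (A ∪ B).ncard = A.ncard + B.ncard :=
    fun hA hB => union_ncard hun hdisj hr1 hc2 hadj hcross hA hB
  -- up-glue shorthands
  have gAA : ∀ {D1 D2}, StA T R1 r D1 → StA T R2 c D2 → StA T R r (D1 ∪ D2) :=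
    fun h1 h2 => glue_AA hun hdisj hr1 hc2 hadj hcross h1 h2
  have gAC : ∀ {D1 D2}, StA T R1 r D1 → StC T R2 c D2 → StA T R r (D1 ∪ D2) :=
    fun h1 h2 => glue_AC hun hdisj hr1 hc2 hadj hcross h1 h2
  have gBB : ∀ {D1 D2}, StB T R1 r D1 → StB T R2 c D2 → StB T R r (D1 ∪ D2) :=
    fun h1 h2 => glue_BB hun hdisj hr1 hc2 hadj hcross h1 h2
  have gCA : ∀ {D1 D2}, StC T R1 r D1 → StA T R2 c D2 → StB T R r (D1 ∪ D2) :=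
    fun h1 h2 => glue_CA hun hdisj hr1 hc2 hadj hcross h1 h2
  have gCB : ∀ {D1 D2}, StC T R1 r D1 → StB T R2 c D2 → StC T R r (D1 ∪ D2) :=
    fun h1 h2 => glue_CB hun hdisj hr1 hc2 hadj hcross h1 h2
  -- glue an A1 with an (A∨C)2 witness
  have gAM : ∀ {D1 D2}, StA T R1 r D1 → (StA T R2 c D2 ∨ StC T R2 c D2) →
      StA T R r (D1 ∪ D2) := by
    rintro D1 D2 h1 (h2 | h2)
    · exact gAA h1 h2
    · exact gAC h1 h2
  obtain ⟨A1, hA1, hA1s⟩ := G1.n1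
  obtain ⟨A2, hA2, hA2s⟩ := G2.n1
  obtain ⟨M2, hM2, hM2s⟩ := good_M G2
  -- component n1
  have c1 : ∃ D, StA T R r D ∧ 2 * D.ncard ≤ R.ncard + 1 := by
    refine ⟨A1 ∪ M2, gAM hA1 hM2, ?_⟩
    rw [hsz hA1.1 (hM2.elim (fun h => h.1) (fun h => h.1))]
    omega
  -- component n2
  have c2 : (∃ D, StC T R r D) → ∃ D, StC T R r D ∧ 2 * D.ncard + 1 ≤ R.ncard := by
    rintro ⟨D, hD⟩
    obtain ⟨h1, h2⟩ := decomp_C hun hdisj hr1 hc2 hadj hcross hD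
    obtain ⟨C1, hC1, hC1s⟩ := G1.n2 ⟨_, h1⟩
    obtain ⟨B2, hB2, hB2s⟩ := G2.n4 ⟨_, h2⟩
    refine ⟨C1 ∪ B2, gCB hC1 hB2, ?_⟩
    rw [hsz hC1.1 hB2.1]
    omega
  -- component n3
  have c3 : (¬ ∃ D, StC T R r D) → ∃ D, StA T R r D ∧ 2 * D.ncard ≤ R.ncard := by
    intro hnc
    by_cases hC1 : ∃ D, StC T R1 r D
    · obtain ⟨C1, hC1'⟩ := hC1
      have hnB2 : ¬ ∃ D, StB T R2 c D := by
        rintro ⟨B2, hB2⟩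
        exact hnc ⟨C1 ∪ B2, gCB hC1' hB2⟩
      obtain ⟨W2, hW2, hW2s⟩ := G2.n5 hnB2
      refine ⟨A1 ∪ W2, gAM hA1 hW2, ?_⟩
      rw [hsz hA1.1 (hW2.elim (fun h => h.1) (fun h => h.1))]
      omega
    · obtain ⟨A1', hA1', hA1's⟩ := G1.n3 hC1
      refine ⟨A1' ∪ M2, gAM hA1' hM2, ?_⟩
      rw [hsz hA1'.1 (hM2.elim (fun h => h.1) (fun h => h.1))]
      omega
  -- component n4
  have c4 : (∃ D, StB T R r D) → ∃ D, StB T R r D ∧ 2 * D.ncard ≤ R.ncard := by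
    rintro ⟨D, hD⟩
    by_cases hC1 : ∃ D, StC T R1 r D
    · obtain ⟨C1, hC1', hC1s⟩ := G1.n2 hC1
      refine ⟨C1 ∪ A2, gCA hC1' hA2, ?_⟩
      rw [hsz hC1'.1 hA2.1]
      omega
    · rcases decomp_B hun hdisj hr1 hc2 hadj hcross hD with ⟨h1, h2⟩ | ⟨h1, h2⟩
      · obtain ⟨B1, hB1, hB1s⟩ := G1.n4 ⟨_, h1⟩
        obtain ⟨B2, hB2, hB2s⟩ := G2.n4 ⟨_, h2⟩
        refine ⟨B1 ∪ B2, gBB hB1 hB2, ?_⟩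
        rw [hsz hB1.1 hB2.1]
        omega
      · exact absurd ⟨_, h1⟩ hC1
  -- component n5
  have c5 : (¬ ∃ D, StB T R r D) →
      ∃ D, (StA T R r D ∨ StC T R r D) ∧ 2 * D.ncard + 1 ≤ R.ncard := by
    intro hnb
    have hnC1 : ¬ ∃ D, StC T R1 r D := by
      rintro ⟨C1, hC1⟩
      exact hnb ⟨C1 ∪ R2, gCA hC1 (stA_total hc2)⟩
    obtain ⟨A1', hA1', hA1's⟩ := G1.n3 hnC1
    by_cases hB2 : ∃ D, StB T R2 c D
    · have hnB1 : ¬ ∃ D, StB T R1 r D := by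
        rintro ⟨B1, hB1⟩
        obtain ⟨B2, hB2'⟩ := hB2
        exact hnb ⟨B1 ∪ B2, gBB hB1 hB2'⟩
      obtain ⟨W1, hW1, hW1s⟩ := G1.n5 hnB1
      have hW1A : StA T R1 r W1 := by
        rcases hW1 with h | h
        · exact h
        · exact absurd ⟨_, h⟩ hnC1
      refine ⟨W1 ∪ M2, Or.inl (gAM hW1A hM2), ?_⟩
      rw [hsz hW1A.1 (hM2.elim (fun h => h.1) (fun h => h.1))]
      omega
    · obtain ⟨W2, hW2, hW2s⟩ := G2.n5 hB2
      refine ⟨A1' ∪ W2, Or.inl (gAM hA1' hW2), ?_⟩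
      rw [hsz hA1'.1 (hW2.elim (fun h => h.1) (fun h => h.1))]
      omega
  -- component n6
  have c6 : (¬ ∃ D, StB T R r D) → ∃ D, StA T R r D ∧ 2 * D.ncard ≤ R.ncard := by
    intro hnb
    have hnC1 : ¬ ∃ D, StC T R1 r D := by
      rintro ⟨C1, hC1⟩
      exact hnb ⟨C1 ∪ R2, gCA hC1 (stA_total hc2)⟩
    obtain ⟨A1', hA1', hA1's⟩ := G1.n3 hnC1
    refine ⟨A1' ∪ M2, gAM hA1' hM2, ?_⟩
    rw [hsz hA1'.1 (hM2.elim (fun h => h.1) (fun h => h.1))]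
    omega
  -- component n7
  have c7 : ∃ D, (StA T R r D ∨ StB T R r D) ∧ 2 * D.ncard ≤ R.ncard := by
    by_cases hC1 : ∃ D, StC T R1 r D
    · obtain ⟨C1, hC1', hC1s⟩ := G1.n2 hC1
      refine ⟨C1 ∪ A2, Or.inr (gCA hC1' hA2), ?_⟩
      rw [hsz hC1'.1 hA2.1]
      omega
    · obtain ⟨A1', hA1', hA1's⟩ := G1.n3 hC1
      refine ⟨A1' ∪ M2, Or.inl (gAM hA1' hM2), ?_⟩
      rw [hsz hA1'.1 (hM2.elim (fun h => h.1) (fun h => h.1))]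
      omega
  -- component k1
  have ck1 : (∀ D, StA T R r D → R.ncard + 1 ≤ 2 * D.ncard) →
      (∀ D, StC T R r D → R.ncard ≤ 2 * D.ncard + 2) → ∃ L, IsCorExc T R r L := by
    intro HA HC
    -- there must exist a C-set of R
    have hCR : ∃ D, StC T R r D := by
      by_contra hnc
      obtain ⟨D, hD, hDs⟩ := c3 hnc
      have := HA D hD
      omega
    obtain ⟨D0, hD0⟩ := hCR
    obtain ⟨h01, h02⟩ := decomp_C hun hdisj hr1 hc2 hadj hcross hD0
    obtain ⟨C1, hC1, hC1s⟩ := G1.n2 ⟨_, h01⟩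
    obtain ⟨B2, hB2, hB2s⟩ := G2.n4 ⟨_, h02⟩
    -- every A1 is big
    have HA1 : ∀ D, StA T R1 r D → R1.ncard + 1 ≤ 2 * D.ncard := by
      intro D hD
      have := HA _ (gAM hD hM2)
      rw [hsz hD.1 (hM2.elim (fun h => h.1) (fun h => h.1))] at this
      omega
    -- tightness of A1 witness : n1 odd
    have ht1 : 2 * A1.ncard = R1.ncard + 1 := le_antisymm hA1s (HA1 _ hA1)
    -- M2 is tight : n2 even
    have ht2 : 2 * M2.ncard = R2.ncard := by
      have := HA _ (gAM hA1 hM2)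
      rw [hsz hA1.1 (hM2.elim (fun h => h.1) (fun h => h.1))] at this
      omega
    -- pin down sizes of C1 and B2
    have hCB := HC _ (gCB hC1 hB2)
    rw [hsz hC1.1 hB2.1] at hCB
    have htC1 : 2 * C1.ncard + 1 = R1.ncard := by omega
    have htB2 : 2 * B2.ncard = R2.ncard := by omega
    -- K for the first side
    obtain ⟨L1, hL1⟩ := G1.k1 HA1 (by
      intro D hD
      have := HC _ (gCB hD hB2)
      rw [hsz hD.1 hB2.1] at this
      omega)
    -- K2 for the second side
    obtain ⟨L2, hL2, hcL2⟩ := G2.k2 (by omega) (by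
      intro D hD
      have := HC _ (gCB hC1 hD)
      rw [hsz hC1.1 hD.1] at this
      omega) (by
      intro D hD
      have := HA _ (gAM hA1 hD)
      rw [hsz hA1.1 (hD.elim (fun h => h.1) (fun h => h.1))] at this
      omega)
    exact ⟨L1 ∪ L2, corglue_a hun hdisj hr1 hc2 hadj hcross hL1 hL2 hcL2⟩
  -- component k2
  have ck2 : (∀ D, StB T R r D → R.ncard ≤ 2 * D.ncard) →
      (∀ D, StA T R r D ∨ StC T R r D → R.ncard ≤ 2 * D.ncard) →
      ∃ L, IsCorOn T R L ∧ r ∉ L := by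
    intro HB HAC
    by_cases hC1 : ∃ D, StC T R1 r D
    · obtain ⟨C1, hC1', hC1s⟩ := G1.n2 hC1
      have hBg := HB _ (gCA hC1' hA2)
      rw [hsz hC1'.1 hA2.1] at hBg
      have htC1 : 2 * C1.ncard + 1 = R1.ncard := by omega
      have htA2 : 2 * A2.ncard = R2.ncard + 1 := by omega
      -- no B2-sets
      have hnB2 : ¬ ∃ D, StB T R2 c D := by
        rintro ⟨B2, hB2⟩
        obtain ⟨B2', hB2', hB2's⟩ := G2.n4 ⟨_, hB2⟩
        have := HAC _ (Or.inr (gCB hC1' hB2'))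
        rw [hsz hC1'.1 hB2'.1] at this
        omega
      -- every A2-set is big
      have HA2' : ∀ D, StA T R2 c D → R2.ncard + 1 ≤ 2 * D.ncard := by
        intro D hD
        have := HB _ (gCA hC1' hD)
        rw [hsz hC1'.1 hD.1] at this
        omega
      -- R2 is a singleton
      have hn2eq : R2.ncard = 1 := by
        by_contra hne
        obtain ⟨A2', hA2', hA2's⟩ := G2.n6 (by omega) hnB2
        have := HA2' _ hA2'
        omega
      have hR2 : R2 = {c} := by
        obtain ⟨x, hx⟩ := Set.ncard_eq_one.mp hn2eq
        rw [hx] at hc2 ⊢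
        simp at hc2
        rw [hc2]
      -- K for the first side
      have hA2c : StA T R2 c {c} := ⟨by simp [hc2], rfl, by
        intro v hv hvD hvc
        rw [hR2] at hv
        simp at hv
        exact (hvc hv).elim⟩
      obtain ⟨L1, hL1⟩ := G1.k1 (by
        intro D hD
        have := HAC _ (Or.inl (gAM hD hM2))
        rw [hsz hD.1 (hM2.elim (fun h => h.1) (fun h => h.1))] at this
        omega) (by
        intro D hD
        have := HB _ (gCA hD hA2c)
        rw [hsz hD.1 hA2c.1] at this
        rw [Set.ncard_singleton] at this
        omega)
      exact ⟨L1 ∪ {c}, corglue_b hun hdisj hr1 hc2 hadj hcross hL1 hR2⟩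
    · -- no C1-sets
      have HA1 : ∀ D, StA T R1 r D → R1.ncard ≤ 2 * D.ncard := by
        intro D hD
        have := HAC _ (Or.inl (gAM hD hM2))
        rw [hsz hD.1 (hM2.elim (fun h => h.1) (fun h => h.1))] at this
        omega
      obtain ⟨A1', hA1', hA1's⟩ := G1.n3 hC1
      have htA1 : 2 * A1'.ncard = R1.ncard := le_antisymm hA1's (HA1 _ hA1')
      have HAC2 : ∀ D, StA T R2 c D ∨ StC T R2 c D → R2.ncard ≤ 2 * D.ncard := by
        intro D hD
        have := HAC _ (Or.inl (gAM hA1' hD))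
        rw [hsz hA1'.1 (hD.elim (fun h => h.1) (fun h => h.1))] at this
        omega
      have ht2 : 2 * M2.ncard = R2.ncard := le_antisymm hM2s (HAC2 _ hM2)
      have hB2 : ∃ D, StB T R2 c D := by
        by_contra hnB2
        obtain ⟨W2, hW2, hW2s⟩ := G2.n5 hnB2
        have := HAC2 _ hW2
        omega
      have hB1 : ∃ D, StB T R1 r D := by
        by_contra hnB1
        obtain ⟨W1, hW1, hW1s⟩ := G1.n5 hnB1
        rcases hW1 with h | h
        · have := HA1 _ h
          omega
        · exact hC1 ⟨_, h⟩
      obtain ⟨B1, hB1', hB1s⟩ := G1.n4 hB1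
      obtain ⟨B2, hB2', hB2s⟩ := G2.n4 hB2
      have hBg := HB _ (gBB hB1' hB2')
      rw [hsz hB1'.1 hB2'.1] at hBg
      have htB1 : 2 * B1.ncard = R1.ncard := by omega
      have htB2 : 2 * B2.ncard = R2.ncard := by omega
      obtain ⟨L1, hL1, hrL1⟩ := G1.k2 (by omega) (by
        intro D hD
        have := HB _ (gBB hD hB2')
        rw [hsz hD.1 hB2'.1] at this
        omega) (by
        intro D hD
        rcases hD with h | h
        · exact HA1 _ h
        · exact absurd ⟨_, h⟩ hC1)
      obtain ⟨L2, hL2, hcL2⟩ := G2.k2 (by omega) (by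
        intro D hD
        have := HB _ (gBB hB1' hD)
        rw [hsz hB1'.1 hD.1] at this
        omega) HAC2
      exact ⟨L1 ∪ L2, corglue_c hun hdisj hr1 hc2 hadj hcross hL1 hrL1 hL2 hcL2⟩
  -- component k3
  have ck3 : (∀ D, StA T R r D ∨ StB T R r D → R.ncard ≤ 2 * D.ncard) →
      ∃ L, IsCorOn T R L := by
    intro HAB
    by_cases hC1 : ∃ D, StC T R1 r D
    · obtain ⟨C1, hC1', hC1s⟩ := G1.n2 hC1
      have hBg := HAB _ (Or.inr (gCA hC1' hA2))
      rw [hsz hC1'.1 hA2.1] at hBg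
      have htC1 : 2 * C1.ncard + 1 = R1.ncard := by omega
      have htA2 : 2 * A2.ncard = R2.ncard + 1 := by omega
      have HA1 : ∀ D, StA T R1 r D → R1.ncard + 1 ≤ 2 * D.ncard := by
        intro D hD
        have := HAB _ (Or.inl (gAM hD hM2))
        rw [hsz hD.1 (hM2.elim (fun h => h.1) (fun h => h.1))] at this
        omega
      have HC1 : ∀ D, StC T R1 r D → R1.ncard ≤ 2 * D.ncard + 2 := by
        intro D hD
        have := HAB _ (Or.inr (gCA hD hA2))
        rw [hsz hD.1 hA2.1] at this
        omega
      obtain ⟨L1, hL1⟩ := G1.k1 HA1 HC1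
      have HA2' : ∀ D, StA T R2 c D → R2.ncard + 1 ≤ 2 * D.ncard := by
        intro D hD
        have := HAB _ (Or.inr (gCA hC1' hD))
        rw [hsz hC1'.1 hD.1] at this
        omega
      by_cases hB2 : ∃ D, StB T R2 c D
      · -- then no B1 can exist with both tight; in fact R1 must be a singleton
        have hnB1 : ¬ ∃ D, StB T R1 r D := by
          rintro ⟨B1, hB1⟩
          obtain ⟨B1', hB1', hB1s⟩ := G1.n4 ⟨_, hB1⟩
          obtain ⟨B2', hB2', hB2s⟩ := G2.n4 hB2
          have := HAB _ (Or.inr (gBB hB1' hB2'))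
          rw [hsz hB1'.1 hB2'.1] at this
          omega
        have hn1eq : R1.ncard = 1 := by
          by_contra hne
          obtain ⟨A1', hA1', hA1's⟩ := G1.n6 (by omega) hnB1
          have := HA1 _ hA1'
          omega
        have hR1 : R1 = {r} := by
          obtain ⟨x, hx⟩ := Set.ncard_eq_one.mp hn1eq
          rw [hx] at hr1 ⊢
          simp at hr1
          rw [hr1]
        -- K for the second side
        have hA1r : StA T R1 r {r} := ⟨by simp [hr1], rfl, by
          intro v hv hvD hvc
          rw [hR1] at hv
          simp at hv
          exact (hvc hv).elim⟩
        obtain ⟨L2, hL2⟩ := G2.k1 HA2' (by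
          intro D hD
          have := HAB _ (Or.inl (gAC hA1r hD))
          rw [hsz hA1r.1 hD.1] at this
          rw [Set.ncard_singleton] at this
          omega)
        exact ⟨L2 ∪ {r}, corglue_b' hun hdisj hr1 hc2 hadj hcross hL2 hR1⟩
      · -- no B2 : R2 must be a singleton
        have hn2eq : R2.ncard = 1 := by
          by_contra hne
          obtain ⟨A2', hA2', hA2's⟩ := G2.n6 (by omega) hB2
          have := HA2' _ hA2'
          omega
        have hR2 : R2 = {c} := by
          obtain ⟨x, hx⟩ := Set.ncard_eq_one.mp hn2eq
          rw [hx] at hc2 ⊢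
          simp at hc2
          rw [hc2]
        exact ⟨L1 ∪ {c}, (corglue_b hun hdisj hr1 hc2 hadj hcross hL1 hR2).1⟩
    · -- no C1-sets : mirror of the k2 analysis
      have HA1 : ∀ D, StA T R1 r D → R1.ncard ≤ 2 * D.ncard := by
        intro D hD
        have := HAB _ (Or.inl (gAM hD hM2))
        rw [hsz hD.1 (hM2.elim (fun h => h.1) (fun h => h.1))] at this
        omega
      obtain ⟨A1', hA1', hA1's⟩ := G1.n3 hC1
      have htA1 : 2 * A1'.ncard = R1.ncard := le_antisymm hA1's (HA1 _ hA1')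
      have HAC2 : ∀ D, StA T R2 c D ∨ StC T R2 c D → R2.ncard ≤ 2 * D.ncard := by
        intro D hD
        have := HAB _ (Or.inl (gAM hA1' hD))
        rw [hsz hA1'.1 (hD.elim (fun h => h.1) (fun h => h.1))] at this
        omega
      have ht2 : 2 * M2.ncard = R2.ncard := le_antisymm hM2s (HAC2 _ hM2)
      have hB2 : ∃ D, StB T R2 c D := by
        by_contra hnB2
        obtain ⟨W2, hW2, hW2s⟩ := G2.n5 hnB2
        have := HAC2 _ hW2
        omega
      have hB1 : ∃ D, StB T R1 r D := by
        by_contra hnB1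
        obtain ⟨W1, hW1, hW1s⟩ := G1.n5 hnB1
        rcases hW1 with h | h
        · have := HA1 _ h
          omega
        · exact hC1 ⟨_, h⟩
      obtain ⟨B1, hB1', hB1s⟩ := G1.n4 hB1
      obtain ⟨B2, hB2', hB2s⟩ := G2.n4 hB2
      have hBg := HAB _ (Or.inr (gBB hB1' hB2'))
      rw [hsz hB1'.1 hB2'.1] at hBg
      have htB1 : 2 * B1.ncard = R1.ncard := by omega
      have htB2 : 2 * B2.ncard = R2.ncard := by omega
      obtain ⟨L1, hL1, hrL1⟩ := G1.k2 (by omega) (by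
        intro D hD
        have := HAB _ (Or.inr (gBB hD hB2'))
        rw [hsz hD.1 hB2'.1] at this
        omega) (by
        intro D hD
        rcases hD with h | h
        · exact HA1 _ h
        · exact absurd ⟨_, h⟩ hC1)
      obtain ⟨L2, hL2, hcL2⟩ := G2.k2 (by omega) (by
        intro D hD
        have := HAB _ (Or.inr (gBB hB1' hD))
        rw [hsz hB1'.1 hD.1] at this
        omega) HAC2
      exact ⟨L1 ∪ L2, (corglue_c hun hdisj hr1 hc2 hadj hcross hL1 hrL1 hL2 hcL2).1⟩
  exact ⟨c1, c2, c3, c4, fun h => c5 h, fun _ h => c6 h, fun _ => c7, ck1,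
    fun _ => ck2, fun _ => ck3⟩
end STEP

section ALL
variable {V : Type*} [Fintype V] {T : SimpleGraph V}

theorem good_all (hacy : T.IsAcyclic) :
    ∀ (n : ℕ) (R : Set V), R.ncard ≤ n → ConnOn T R → ∀ r ∈ R, Good T R r := by
  intro n
  induction n with
  | zero =>
    intro R h hconn r hr
    have := (Set.ncard_pos (Set.toFinite _)).mpr ⟨r, hr⟩
    omega
  | succ n ih =>
    intro R hle hconn r hr
    by_cases h1 : R.ncard ≤ 1
    · have hpos := (Set.ncard_pos (Set.toFinite R)).mpr ⟨r, hr⟩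
      have h1' : R.ncard = 1 := by omega
      obtain ⟨x, hx⟩ := Set.ncard_eq_one.mp h1'
      rw [hx] at hr ⊢
      simp at hr
      rw [hr]
      exact good_singleton x
    · -- find a neighbor of r within R
      have hv : ∃ v ∈ R, v ≠ r := by
        by_contra hcon
        push_neg at hcon
        have : R ⊆ {r} := fun x hx => hcon x hx
        have := Set.ncard_le_ncard this (Set.toFinite _)
        rw [Set.ncard_singleton] at this
        omega
      obtain ⟨v, hvR, hvr⟩ := hv
      obtain ⟨w, hw⟩ := hconn r hr v hvR
      have hcc : ∃ c ∈ R, T.Adj r c := by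
        cases w with
        | nil => exact (hvr rfl).elim
        | cons h p =>
          rename_i b
          exact ⟨b, hw b (by simp), h⟩
      obtain ⟨c, hcR, hadj⟩ := hcc
      obtain ⟨R1, R2, hun, hdisj, hr1, hc2, hconn1, hconn2, hcross⟩ :=
        split hacy hconn hr hcR hadj
      have hnn : R1.ncard + R2.ncard = R.ncard := R_ncard hun hdisj hr1 hc2 hadj hcross
      have hn1pos : 1 ≤ R1.ncard := (Set.ncard_pos (Set.toFinite _)).mpr ⟨r, hr1⟩
      have hn2pos : 1 ≤ R2.ncard := (Set.ncard_pos (Set.toFinite _)).mpr ⟨c, hc2⟩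
      exact good_step hun hdisj hr1 hc2 hadj hcross
        (ih R1 (by omega) hconn1 r hr1) (ih R2 (by omega) hconn2 c hc2)
end ALL

section FINAL
variable {V : Type*} [Fintype V] {T : SimpleGraph V}

lemma isKFD_iff {D : Set V} : IsKFDSet T 1 D ↔ ∀ v ∉ D, cnt T v D = 1 := by
  constructor
  · exact fun h v hv => h.2 v hv
  · intro h
    refine ⟨fun v hv => ?_, fun v hv => h v hv⟩
    have h1 := h v hv
    unfold cnt at h1
    obtain ⟨u, hu⟩ := Set.ncard_eq_one.mp h1
    have : u ∈ T.neighborSet v ∩ D := by rw [hu]; exact rfl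
    exact ⟨u, this.2, this.1.symm⟩

lemma state_to_KFD {D : Set V} {r : V} (h : StA T univ r D ∨ StB T univ r D) :
    IsKFDSet T 1 D := by
  rw [isKFD_iff]
  intro v hv
  rcases h with ⟨hD, hrD, f⟩ | ⟨hD, hrD, f, o⟩
  · exact f v trivial hv (fun hveq => hv (hveq ▸ hrD))
  · by_cases hvr : v = r
    · exact hvr ▸ o
    · exact f v trivial hv hvr

lemma KFD_to_state {D : Set V} (r : V) (h : IsKFDSet T 1 D) :
    StA T univ r D ∨ StB T univ r D := by
  rw [isKFD_iff] at h
  by_cases hr : r ∈ D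
  · exact Or.inl ⟨Set.subset_univ _, hr, fun v _ hv _ => h v hv⟩
  · exact Or.inr ⟨Set.subset_univ _, hr, fun v _ hv _ => h v hv, h r hr⟩

lemma connOn_univ (hc : T.Connected) : ConnOn T (Set.univ : Set V) := by
  intro u _ v _
  obtain ⟨w⟩ := hc.preconnected u v
  exact ⟨w, fun x _ => trivial⟩

/-- the pendant-pairing function of a corona structure. -/
lemma corOn_support {L : Set V} (hL : IsCorOn T (Set.univ : Set V) L) :
    ∃ s : V → V, (∀ l ∈ L, T.neighborSet l = {s l} ∧ s l ∉ L) ∧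
      Set.InjOn s L ∧ s '' L = Lᶜ := by
  classical
  obtain ⟨-, f, leaf⟩ := hL
  choose s hs hsL using fun l (hl : l ∈ L) => leaf l hl
  refine ⟨fun l => if hl : l ∈ L then s l hl else l, fun l hl => ?_, ?_, ?_⟩
  · simp only [dif_pos hl]
    constructor
    · have := hs l hl; rwa [Set.inter_univ] at this
    · exact hsL l hl
  · intro l1 h1 l2 h2 heq
    simp only [dif_pos h1, dif_pos h2] at heq
    -- both l1 l2 are neighbors of u := s l1 l2 inside L, and u has exactly one L-neighbor
    set u := s l1 h1 with hu
    have hadj1 : T.Adj u l1 := by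
      have h := hs l1 h1
      rw [Set.inter_univ] at h
      have : u ∈ T.neighborSet l1 := by rw [h]; exact rfl
      exact this.symm
    have hadj2 : T.Adj u l2 := by
      have h := hs l2 h2
      rw [Set.inter_univ] at h
      have : u ∈ T.neighborSet l2 := by rw [h, ← heq]; exact rfl
      exact this.symm
    have hcnt := f u trivial (hsL l1 h1)
    obtain ⟨x, hx⟩ := Set.ncard_eq_one.mp hcnt
    have m1 : l1 ∈ T.neighborSet u ∩ L := ⟨hadj1, h1⟩
    have m2 : l2 ∈ T.neighborSet u ∩ L := ⟨hadj2, h2⟩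
    rw [hx] at m1 m2
    simp at m1 m2
    rw [m1, m2]
  · apply Set.Subset.antisymm
    · rintro x ⟨l, hl, rfl⟩
      simp only [dif_pos hl]
      exact hsL l hl
    · intro u hu
      have hcnt := f u trivial hu
      unfold cnt at hcnt
      obtain ⟨x, hx⟩ := Set.ncard_eq_one.mp hcnt
      have hxm : x ∈ T.neighborSet u ∩ L := by rw [hx]; exact rfl
      refine ⟨x, hxm.2, ?_⟩
      simp only [dif_pos hxm.2]
      have h := hs x hxm.2
      rw [Set.inter_univ] at h
      have : u ∈ T.neighborSet x := hxm.1.symm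
      rw [h] at this
      exact this.symm

lemma corOn_halves {L : Set V} (hL : IsCorOn T (Set.univ : Set V) L) :
    2 * L.ncard = Fintype.card V := by
  obtain ⟨s, hprop, hinj, himg⟩ := corOn_support hL
  have h1 : L.ncard = Lᶜ.ncard := by
    rw [← himg, Set.ncard_image_of_injOn hinj]
  have h2 : L.ncard + Lᶜ.ncard = Fintype.card V := by
    rw [Set.ncard_add_ncard_compl]
    exact Nat.card_eq_fintype_card
  omega

lemma corOn_lower {L D : Set V} (hL : IsCorOn T (Set.univ : Set V) L)
    (hD : IsKFDSet T 1 D) : L.ncard ≤ D.ncard := by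
  classical
  obtain ⟨s, hprop, hinj, himg⟩ := corOn_support hL
  rw [isKFD_iff] at hD
  set g : V → V := fun l => if l ∈ D then l else s l with hg
  have hgD : ∀ l ∈ L, g l ∈ D := by
    intro l hl
    by_cases h : l ∈ D
    · simpa [hg, h]
    · simp only [hg, if_neg h]
      have hcnt := hD l h
      unfold cnt at hcnt
      obtain ⟨x, hx⟩ := Set.ncard_eq_one.mp hcnt
      have hxm : x ∈ T.neighborSet l ∩ D := by rw [hx]; exact rfl
      have hth := hxm.1
      rw [(hprop l hl).1] at hth
      simp at hth
      exact hth ▸ hxm.2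
  have hginj : Set.InjOn g L := by
    intro l1 h1 l2 h2 heq
    by_cases hd1 : l1 ∈ D <;> by_cases hd2 : l2 ∈ D
    · simpa [hg, hd1, hd2] using heq
    · simp only [hg, if_pos hd1, if_neg hd2] at heq
      exact absurd (heq ▸ h1) ((hprop l2 h2).2)
    · simp only [hg, if_neg hd1, if_pos hd2] at heq
      exact absurd (heq ▸ h2) ((hprop l1 h1).2)
    · simp only [hg, if_neg hd1, if_neg hd2] at heq
      exact hinj h1 h2 heq
  calc L.ncard = (g '' L).ncard := (Set.ncard_image_of_injOn hginj).symm
    _ ≤ D.ncard := Set.ncard_le_ncard (by rintro x ⟨l, hl, rfl⟩; exact hgD l hl) (Set.toFinite _)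

end FINAL

section BRIDGE
variable {V : Type*} [Fintype V] {T : SimpleGraph V}

lemma corona_adj_ll {α : Type*} {H : SimpleGraph α} {x y : α} :
    (corona H).Adj (Sum.inl x) (Sum.inl y) ↔ H.Adj x y := by
  rw [corona, SimpleGraph.fromRel_adj]
  constructor
  · rintro ⟨hne, h | h⟩
    · exact h
    · exact h.symm
  · intro h
    exact ⟨by simpa using h.ne, Or.inl h⟩

lemma corona_adj_lr {α : Type*} {H : SimpleGraph α} {x y : α} :
    (corona H).Adj (Sum.inl x) (Sum.inr y) ↔ x = y := by
  rw [corona, SimpleGraph.fromRel_adj]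
  constructor
  · rintro ⟨hne, h | h⟩
    · exact h
    · exact h.elim
  · intro h
    exact ⟨by simp, Or.inl h⟩

lemma corona_adj_rr {α : Type*} {H : SimpleGraph α} {x y : α} :
    ¬ (corona H).Adj (Sum.inr x) (Sum.inr y) := by
  rw [corona, SimpleGraph.fromRel_adj]
  rintro ⟨hne, h | h⟩ <;> exact h

/-- forward bridge : a corona-of-tree carries a relative corona structure. -/
lemma corOn_of_isCorona (h : IsCoronaOfTree T) : ∃ L, IsCorOn T (Set.univ : Set V) L := by
  classical
  obtain ⟨α, inst, H, hH, ⟨e⟩⟩ := h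
  set L : Set V := {v | ∃ x, e v = Sum.inr x} with hLdef
  refine ⟨L, Set.subset_univ _, ?_, ?_⟩
  · intro v _ hv
    rcases hev : e v with x | x
    swap
    · exact absurd ⟨x, hev⟩ hv
    have hset : T.neighborSet v ∩ L = {e.symm (Sum.inr x)} := by
      ext u
      simp only [Set.mem_inter_iff, SimpleGraph.mem_neighborSet, Set.mem_singleton_iff,
        hLdef, Set.mem_setOf_eq]
      constructor
      · rintro ⟨hadj, y, hey⟩
        have hadj' : (corona H).Adj (e v) (e u) := e.map_adj_iff.mpr hadj
        rw [hev, hey, corona_adj_lr] at hadj'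
        rw [← hadj'] at hey
        have := congrArg e.symm hey
        simpa using this
      · rintro rfl
        have he : e (e.symm (Sum.inr x)) = Sum.inr x := e.toEquiv.apply_symm_apply _
        constructor
        · have : (corona H).Adj (e v) (e (e.symm (Sum.inr x))) := by
            rw [hev, he, corona_adj_lr]
          exact e.map_adj_iff.mp this
        · exact ⟨x, he⟩
    unfold cnt
    rw [hset, Set.ncard_singleton]
  · intro l hl
    obtain ⟨x, hex⟩ := hl
    refine ⟨e.symm (Sum.inl x), ?_, ?_⟩
    · rw [Set.inter_univ]
      ext u
      simp only [SimpleGraph.mem_neighborSet, Set.mem_singleton_iff]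
      constructor
      · intro hadj
        have hadj' : (corona H).Adj (e l) (e u) := e.map_adj_iff.mpr hadj
        rw [hex] at hadj'
        rcases heu : e u with y | y
        · rw [heu] at hadj'
          have hyx : y = x := (corona_adj_lr.mp hadj'.symm)
          rw [hyx] at heu
          have := congrArg e.symm heu
          simpa using this
        · rw [heu] at hadj'
          exact absurd hadj' (corona_adj_rr)
      · rintro rfl
        have he : e (e.symm (Sum.inl x)) = Sum.inl x := e.toEquiv.apply_symm_apply _
        have : (corona H).Adj (e l) (e (e.symm (Sum.inl x))) := by
          rw [hex, he]
          exact (corona_adj_lr.mpr rfl).symm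
        exact e.map_adj_iff.mp this
    · rintro ⟨y, hy⟩
      have he : e (e.symm (Sum.inl x)) = Sum.inl x := e.toEquiv.apply_symm_apply _
      rw [he] at hy
      exact absurd hy (by simp)
end BRIDGE

section BRIDGE2
variable {V : Type*} [Fintype V] {T : SimpleGraph V}

lemma walk_avoid_leaves {L : Set V} (hL : ∀ l ∈ L, ∃ z, T.neighborSet l = {z})
    {u v : V} (p : T.Walk u v) (hp : p.IsPath) (hu : u ∉ L) (hv : v ∉ L) :
    ∀ x ∈ p.support, x ∉ L := by
  induction p with
  | nil =>
    intro x hx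
    simp at hx
    rwa [hx]
  | @cons a b w h q ih =>
    have hpq : q.IsPath ∧ a ∉ q.support := (SimpleGraph.Walk.cons_isPath_iff h q).mp hp
    have hb : b ∉ L := by
      intro hbL
      obtain ⟨z, hz⟩ := hL b hbL
      have hua : a = z := by
        have : a ∈ T.neighborSet b := h.symm
        rw [hz] at this
        exact this
      cases q with
      | nil => exact hv hbL
      | @cons b b' w' h' q' =>
        have hb' : b' = z := by
          have : b' ∈ T.neighborSet b := h'
          rw [hz] at this
          exact this
        have : a ∈ (SimpleGraph.Walk.cons h' q').support := by
          rw [hua, ← hb']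
          simp [SimpleGraph.Walk.start_mem_support]
        exact hpq.2 this
    intro x hx
    rw [SimpleGraph.Walk.support_cons] at hx
    rcases List.mem_cons.mp hx with rfl | hx'
    · exact hu
    · exact ih hpq.1 hb hv x hx'

lemma reach_within (hc : T.Connected) {L : Set V} (hL : ∀ l ∈ L, ∃ z, T.neighborSet l = {z})
    {u v : V} (hu : u ∉ L) (hv : v ∉ L) :
    ∃ w : T.Walk u v, ∀ x ∈ w.support, x ∉ L := by
  classical
  obtain ⟨w⟩ := hc.preconnected u v
  exact ⟨w.bypass, walk_avoid_leaves hL w.bypass (SimpleGraph.Walk.bypass_isPath w) hu hv⟩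

/-- backward bridge : a relative corona structure on a tree gives corona-of-tree. -/
lemma isCorona_of_corOn (hT : T.IsTree) (hn : 2 ≤ Fintype.card V) {L : Set V}
    (hL : IsCorOn T (Set.univ : Set V) L) : IsCoronaOfTree T := by
  classical
  obtain ⟨s, hprop, hinj, himg⟩ := corOn_support hL
  have hVne : Nonempty V := Fintype.card_pos_iff.mp (by omega)
  have hLne : L.Nonempty := by
    by_contra h
    rw [Set.not_nonempty_iff_eq_empty] at h
    obtain ⟨v⟩ := hVne
    have h1 := hL.2.1 v trivial (by rw [h]; exact Set.notMem_empty v)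
    rw [h, cnt_empty] at h1
    omega
  haveI : Fintype ↥L := (Set.toFinite L).fintype
  set k := Fintype.card ↥L with hkdef
  have hk : 0 < k := Fintype.card_pos_iff.mpr ⟨⟨hLne.choose, hLne.choose_spec⟩⟩
  set eL : ↥L ≃ Fin k := Fintype.equivFin ↥L with heL
  have hadj_leaf : ∀ l ∈ L, ∀ u : V, T.Adj l u ↔ u = s l := by
    intro l hl u
    constructor
    · intro hadj
      have : u ∈ T.neighborSet l := hadj
      rw [(hprop l hl).1] at this
      exact this
    · rintro rfl
      have : s l ∈ T.neighborSet l := by rw [(hprop l hl).1]; exact rfl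
      exact this
  set eqS : ↥L ≃ ↥(Lᶜ) := Equiv.ofBijective (fun l => ⟨s l, (hprop l l.2).2⟩) (by
    constructor
    · intro a b hab
      exact Subtype.ext (hinj a.2 b.2 (congrArg Subtype.val hab))
    · intro u
      have hu : (u : V) ∈ s '' L := by rw [himg]; exact u.2
      obtain ⟨l, hl, hsl⟩ := hu
      exact ⟨⟨l, hl⟩, Subtype.ext hsl⟩) with heqS
  set ψ : Fin k → V := fun i => s ((eL.symm i : ↥L) : V) with hψ
  have hψcompl : ∀ i, ψ i ∈ Lᶜ := fun i => (hprop _ (eL.symm i).2).2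
  have hψinj : Function.Injective ψ := by
    intro i j hij
    have := hinj (eL.symm i).2 (eL.symm j).2 hij
    have h2 : eL.symm i = eL.symm j := Subtype.ext this
    simpa using congrArg eL h2
  set H : SimpleGraph (Fin k) :=
    { Adj := fun i j => T.Adj (ψ i) (ψ j),
      symm := ⟨fun i j h => h.symm⟩,
      loopless := ⟨fun i h => T.loopless.irrefl _ h⟩ } with hH
  -- index of a non-leaf vertex
  set idx : ∀ u : V, u ∉ L → Fin k := fun u hu => eL (eqS.symm ⟨u, hu⟩) with hidx
  have hψidx : ∀ (u : V) (hu : u ∉ L), ψ (idx u hu) = u := by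
    intro u hu
    rw [hψ, hidx]
    simp only [Equiv.symm_apply_apply]
    exact congrArg Subtype.val (eqS.apply_symm_apply ⟨u, hu⟩)
  have hidxψ : ∀ i : Fin k, idx (ψ i) (hψcompl i) = i := by
    intro i
    apply hψinj
    exact hψidx _ _
  -- the isomorphism's underlying equivalence
  set F : V ≃ (Fin k) ⊕ (Fin k) :=
    (Equiv.Set.sumCompl L).symm.trans ((Equiv.sumComm ↥L ↥(Lᶜ)).trans
      (Equiv.sumCongr (eqS.symm.trans eL) eL)) with hF
  have hF1 : ∀ (u : V) (hu : u ∉ L), F u = Sum.inl (idx u hu) := by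
    intro u hu
    rw [hF, hidx]
    simp only [Equiv.trans_apply]
    rw [Equiv.Set.sumCompl_symm_apply_of_notMem hu]
    rfl
  have hF2 : ∀ (l : V) (hl : l ∈ L), F l = Sum.inr (eL ⟨l, hl⟩) := by
    intro l hl
    rw [hF]
    simp only [Equiv.trans_apply]
    rw [Equiv.Set.sumCompl_symm_apply_of_mem hl]
    rfl
  -- adjacency transfer
  have hadjF : ∀ a b : V, (corona H).Adj (F a) (F b) ↔ T.Adj a b := by
    intro a b
    by_cases ha : a ∈ L <;> by_cases hb : b ∈ L
    · rw [hF2 a ha, hF2 b hb]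
      constructor
      · intro h
        exact absurd h corona_adj_rr
      · intro h
        have : b = s a := (hadj_leaf a ha b).mp h
        exact absurd (this ▸ hb) (hprop a ha).2
    · rw [hF2 a ha, hF1 b hb]
      constructor
      · intro h
        have hi : idx b hb = eL ⟨a, ha⟩ := corona_adj_lr.mp h.symm
        have : ψ (idx b hb) = ψ (eL ⟨a, ha⟩) := congrArg ψ hi
        rw [hψidx b hb] at this
        have hsa : ψ (eL ⟨a, ha⟩) = s a := by
          rw [hψ]
          simp
        rw [hsa] at this
        exact (hadj_leaf a ha b).mpr this
      · intro h
        have hbs : b = s a := (hadj_leaf a ha b).mp h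
        refine (corona_adj_lr.mpr ?_).symm
        have : ψ (idx b hb) = ψ (eL ⟨a, ha⟩) := by
          rw [hψidx b hb, hbs, hψ]
          simp
        exact hψinj this
    · rw [hF1 a ha, hF2 b hb]
      constructor
      · intro h
        have hi : idx a ha = eL ⟨b, hb⟩ := corona_adj_lr.mp h
        have : ψ (idx a ha) = ψ (eL ⟨b, hb⟩) := congrArg ψ hi
        rw [hψidx a ha] at this
        have hsb : ψ (eL ⟨b, hb⟩) = s b := by
          rw [hψ]
          simp
        rw [hsb] at this
        exact (hadj_leaf b hb a).mpr this |>.symm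
      · intro h
        have has : a = s b := (hadj_leaf b hb a).mp h.symm
        refine corona_adj_lr.mpr ?_
        have : ψ (idx a ha) = ψ (eL ⟨b, hb⟩) := by
          rw [hψidx a ha, has, hψ]
          simp
        exact hψinj this
    · rw [hF1 a ha, hF1 b hb]
      rw [corona_adj_ll]
      show T.Adj (ψ _) (ψ _) ↔ _
      rw [hψidx a ha, hψidx b hb]
  -- H is a tree
  have hHconn : H.Connected := by
    have hne : Nonempty (Fin k) := ⟨⟨0, hk⟩⟩
    refine ⟨fun i j => ?_⟩
    obtain ⟨w, hw⟩ := reach_within hT.isConnected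
      (fun l hl => ⟨s l, (hprop l hl).1⟩) (hψcompl i) (hψcompl j)
    have key : ∀ (a b : V) (w : T.Walk a b) (ha : a ∉ L) (hb : b ∉ L),
        (∀ x ∈ w.support, x ∉ L) → H.Reachable (idx a ha) (idx b hb) := by
      intro a b w
      induction w with
      | nil => intro ha hb _; rfl
      | @cons a' b' w' h q ih =>
        intro ha hb hsup
        have hb' : b' ∉ L := hsup b' (by simp)
        have hadj : H.Adj (idx a' ha) (idx b' hb') := by
          show T.Adj (ψ _) (ψ _)
          rw [hψidx, hψidx]
          exact h
        exact hadj.reachable.trans (ih hb' hb (fun x hx => hsup x (by simp [hx])))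
    have := key _ _ w (hψcompl i) (hψcompl j) hw
    rwa [hidxψ i, hidxψ j] at this
  have hHacy : H.IsAcyclic := by
    intro i cyc hcyc
    let hhom : H →g T := ⟨ψ, fun h => h⟩
    have : (cyc.map hhom).IsCycle :=
      (SimpleGraph.Walk.map_isCycle_iff_of_injective (f := hhom) (by exact hψinj)).mpr hcyc
    exact hT.IsAcyclic _ this
  exact ⟨Fin k, inferInstance, H, ⟨hHconn, hHacy⟩, ⟨⟨F, hadjF _ _⟩⟩⟩
end BRIDGE2

end FD1

/-- If `T` is a tree of order `n ≥ 2`, then `fd₁(T) ≤ n/2`, with equality iff `T` is the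
corona of a tree. -/
theorem fd1_tree_le_half {V : Type*} [Fintype V] (T : SimpleGraph V) (hT : T.IsTree)
    (n : ℕ) (hn : Fintype.card V = n) (h2 : 2 ≤ n) :
    (fd1 T : ℚ) ≤ (n : ℚ) / 2 ∧ ((fd1 T : ℚ) = (n : ℚ) / 2 ↔ IsCoronaOfTree T) := by
  classical
  have hNV : Nonempty V := Fintype.card_pos_iff.mp (by omega)
  obtain ⟨r⟩ := hNV
  have huniv : (Set.univ : Set V).ncard = n := by
    rw [Set.ncard_univ, Nat.card_eq_fintype_card, hn]
  have G : FD1.Good T Set.univ r :=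
    FD1.good_all hT.IsAcyclic n Set.univ (le_of_eq huniv) (FD1.connOn_univ hT.isConnected)
      r trivial
  have hup : ∃ D : Set V, IsKFDSet T 1 D ∧ 2 * D.ncard ≤ n := by
    obtain ⟨D, hD, hs⟩ := G.n7 (by omega)
    rw [huniv] at hs
    exact ⟨D, FD1.state_to_KFD hD, hs⟩
  obtain ⟨D0, hD0, hs0⟩ := hup
  have hfd1_le : 2 * fd1 T ≤ n := by
    have : fd1 T ≤ D0.ncard := Nat.sInf_le ⟨D0, hD0, rfl⟩
    omega
  have hfd1_mem : ∃ D : Set V, IsKFDSet T 1 D ∧ D.ncard = fd1 T := by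
    have hmem : fd1 T ∈ {m | ∃ D : Set V, IsKFDSet T 1 D ∧ D.ncard = m} :=
      Nat.sInf_mem ⟨D0.ncard, D0, hD0, rfl⟩
    exact hmem
  refine ⟨?_, ?_, ?_⟩
  · rw [le_div_iff₀ (by norm_num : (0:ℚ) < 2)]
    have : ((fd1 T : ℕ) : ℚ) * 2 = ((2 * fd1 T : ℕ) : ℚ) := by push_cast; ring
    rw [this]
    exact_mod_cast hfd1_le
  · intro heq
    have h2' : 2 * fd1 T = n := by
      have hq : ((2 * fd1 T : ℕ) : ℚ) = (n : ℚ) := by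
        push_cast
        rw [heq]
        ring
      exact_mod_cast hq
    have htight : ∀ D : Set V, IsKFDSet T 1 D → n ≤ 2 * D.ncard := by
      intro D hD
      have : fd1 T ≤ D.ncard := Nat.sInf_le ⟨D, hD, rfl⟩
      omega
    obtain ⟨L, hLcor⟩ := G.k3 (by omega) (by
      intro D hD
      rw [huniv]
      exact htight D (FD1.state_to_KFD hD))
    exact FD1.isCorona_of_corOn hT (by omega) hLcor
  · intro hcor
    obtain ⟨L, hLcor⟩ := FD1.corOn_of_isCorona hcor
    have hhalf := FD1.corOn_halves hLcor
    obtain ⟨D, hD, hDcard⟩ := hfd1_mem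
    have hlow := FD1.corOn_lower hLcor hD
    have h2' : 2 * fd1 T = n := by omega
    have hq : ((2 * fd1 T : ℕ) : ℚ) = (n : ℚ) := by exact_mod_cast congrArg (fun m : ℕ => (m : ℚ)) h2'
    push_cast at hq
    linarith
end

section
/- In a tree, every minimum fair dominating set is a 1-fair dominating set. -/
open SimpleGraph Set Classical
universe u



lemma fdaux_nbr_transfer {T : SimpleGraph V} {s : Set V} (D' : Set ↥s) {v : V} (hv : v ∈ s) :
    T.neighborSet v ∩ (Subtype.val '' D') =
      Subtype.val '' ((T.induce s).neighborSet ⟨v, hv⟩ ∩ D') := by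
  ext x
  simp only [Set.mem_inter_iff, mem_neighborSet, Set.mem_image, comap_adj,
    Function.Embedding.coe_subtype]
  constructor
  · rintro ⟨hadj, ⟨x', hx', rfl⟩⟩
    exact ⟨x', ⟨hadj, hx'⟩, rfl⟩
  · rintro ⟨x', ⟨hadj, hx'⟩, rfl⟩
    exact ⟨hadj, ⟨x', hx', rfl⟩⟩

lemma fdaux_count_transfer {T : SimpleGraph V} {s : Set V} {D' : Set ↥s}
    (hfair : ∀ v' ∉ D', ((T.induce s).neighborSet v' ∩ D').ncard = 1)
    {v : V} (hv : v ∈ s) (hvD : (⟨v, hv⟩ : ↥s) ∉ D') :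
    (T.neighborSet v ∩ (Subtype.val '' D')).ncard = 1 := by
  rw [fdaux_nbr_transfer D' hv, Set.ncard_image_of_injective _ Subtype.val_injective]
  exact hfair _ hvD

lemma fdaux_filtered_inter {T : SimpleGraph V} {v b : V} {D : Set V}
    (hnb : ∀ z, T.Adj v z → z ∈ D → z = b) (hadj : T.Adj v b) (hbD : b ∈ D) :
    T.neighborSet v ∩ D = {b} := by
  ext x
  simp only [Set.mem_inter_iff, mem_neighborSet, Set.mem_singleton_iff]
  exact ⟨fun ⟨h1, h2⟩ => hnb x h1 h2, fun h => h ▸ ⟨hadj, hbD⟩⟩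

lemma fdaux_inter_insert {T : SimpleGraph V} {v u : V} (h : ¬ T.Adj v u) (D0 : Set V) :
    T.neighborSet v ∩ insert u D0 = T.neighborSet v ∩ D0 := by
  ext x
  simp only [Set.mem_inter_iff, mem_neighborSet, Set.mem_insert_iff]
  constructor
  · rintro ⟨hadj, rfl | hx⟩
    · exact absurd hadj h
    · exact ⟨hadj, hx⟩
  · exact fun ⟨hadj, hx⟩ => ⟨hadj, Or.inr hx⟩

lemma fdaux_mem_image_iff {s : Set V} {D' : Set ↥s} {v : V} (hv : v ∈ s) :
    v ∈ Subtype.val '' D' ↔ (⟨v, hv⟩ : ↥s) ∈ D' := by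
  constructor
  · rintro ⟨x', hx', h⟩
    cases Subtype.val_injective (a₁ := x') (a₂ := ⟨v, hv⟩) h
    exact hx'
  · exact fun h => ⟨⟨v, hv⟩, h, rfl⟩

lemma fdaux_nonempty_of_ncard_one {s : Set V} (h : s.ncard = 1) : s.Nonempty := by
  rcases Set.ncard_eq_one.mp h with ⟨a, rfl⟩; exact ⟨a, rfl⟩

lemma fdaux_gateway {T : SimpleGraph V} {x y a w : V} (p : T.Walk x y) (hp : p.IsPath)
    (ha : a ∈ p.support) (hx : x ≠ a) (hy : y ≠ a)
    (hgw : ∀ z, T.Adj a z → z ∈ p.support → z = w) : False := by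
  have hspec := p.take_spec ha
  set q := p.takeUntil a ha with hq
  set r := p.dropUntil a ha with hr
  obtain ⟨z, hz, q₂, hq₂⟩ := SimpleGraph.Walk.exists_eq_cons_of_ne (Ne.symm hx) q.reverse
  have hzq : z ∈ q.support := by
    have : z ∈ q.reverse.support := by rw [hq₂]; simp
    rwa [SimpleGraph.Walk.support_reverse, List.mem_reverse] at this
  have hzw : z = w := hgw z hz (p.support_takeUntil_subset ha hzq)
  obtain ⟨z', hz', r₂, hr₂⟩ := SimpleGraph.Walk.exists_eq_cons_of_ne (Ne.symm hy) r
  have hz'r : z' ∈ r.support.tail := by rw [hr₂]; simp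
  have hz'w : z' = w := hgw z' hz'
    (p.support_dropUntil_subset ha (List.mem_of_mem_tail hz'r))
  have hp' : (q.append r).IsPath := by rwa [hspec]
  have hnd := hp'.support_nodup
  rw [SimpleGraph.Walk.support_append, List.nodup_append] at hnd
  exact hnd.2.2 _ hzq _ hz'r (hzw.trans hz'w.symm)

lemma fdaux_pendant_not_mem {T : SimpleGraph V} {a u x y : V}
    (hu : ∀ z, T.Adj a z → z = u)
    (p : T.Walk x y) (hp : p.IsPath) (hx : x ≠ a) (hy : y ≠ a) : a ∉ p.support :=
  fun ha => fdaux_gateway p hp ha hx hy (fun z hz _ => hu z hz)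

lemma fdaux_deg2_not_mem {T : SimpleGraph V} {a u w x y : V}
    (hu : ∀ z, T.Adj a z → z = u)
    (hnb : ∀ z, T.Adj u z → z = a ∨ z = w)
    (p : T.Walk x y) (hp : p.IsPath) (hxa : x ≠ a) (hxu : x ≠ u)
    (hya : y ≠ a) (hyu : y ≠ u) : u ∉ p.support := by
  intro hmem
  apply fdaux_gateway p hp hmem hxu hyu
  intro z hz hzp
  rcases hnb z hz with rfl | rfl
  · exact absurd hzp (fdaux_pendant_not_mem hu p hp hxa hya)
  · rfl

lemma fdaux_reachable_induce {T : SimpleGraph V} {s : Set V} :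
    ∀ {x y : V} (p : T.Walk x y), (∀ v ∈ p.support, v ∈ s) →
    ∀ (hx : x ∈ s) (hy : y ∈ s), (T.induce s).Reachable ⟨x, hx⟩ ⟨y, hy⟩ := by
  intro x y p
  induction p with
  | nil => exact fun _ hx hy => Reachable.refl _
  | @cons x b y h p ih =>
    intro hsub hx hy
    have hb : b ∈ s := hsub _ (by simp)
    have hadj : (T.induce s).Adj ⟨x, hx⟩ ⟨b, hb⟩ := by simpa using h
    exact hadj.reachable.trans (ih (fun v hv => hsub v (by simp [hv])) hb hy)

lemma fdaux_isAcyclic_induce {T : SimpleGraph V} (h : T.IsAcyclic) (s : Set V) :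
    (T.induce s).IsAcyclic := by
  intro v c hc
  exact h (c.map (SimpleGraph.Embedding.induce s).toHom)
    (hc.map (Subtype.val_injective))

lemma fdaux_exists_parent {T : SimpleGraph V} (hc : T.Connected) {r v : V} (hne : v ≠ r) :
    ∃ u, T.Adj v u ∧ T.dist r u + 1 = T.dist r v := by
  obtain ⟨p, hp, hlen⟩ := hc.exists_path_of_dist r v
  obtain ⟨z, hz, q, hq⟩ := Walk.exists_eq_cons_of_ne hne p.reverse
  have hql : q.length + 1 = p.length := by
    have := congrArg Walk.length hq
    simpa [Nat.add_comm] using this.symm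
  have h1 : T.dist r z ≤ q.length := by
    simpa using SimpleGraph.dist_le q.reverse
  have h2 : T.dist r v ≤ T.dist r z + 1 := by
    have htri := hc.dist_triangle (u := r) (v := z) (w := v)
    have : T.dist z v = 1 := SimpleGraph.dist_eq_one_iff_adj.mpr hz.symm
    omega
  exact ⟨z, hz, by omega⟩

lemma fdaux_adj_dist_ne {T : SimpleGraph V} (hT : T.IsTree) (r : V) {v y : V}
    (h : T.Adj v y) : T.dist r v ≠ T.dist r y := by
  intro heq
  have hc := hT.isConnected
  obtain ⟨p, hp, hlen⟩ := hc.exists_path_of_dist r v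
  have hymem : y ∉ p.support := by
    intro hmem
    obtain ⟨z', hz', r₂, hr₂⟩ := Walk.exists_eq_cons_of_ne h.ne' (p.dropUntil y hmem)
    have hdl : (p.dropUntil y hmem).length = r₂.length + 1 := by
      rw [hr₂]; simp
    have hsplit := congrArg Walk.length (p.take_spec hmem)
    rw [Walk.length_append] at hsplit
    have hty : T.dist r y ≤ (p.takeUntil y hmem).length := SimpleGraph.dist_le _
    omega
  have hp' : (p.concat h).IsPath := by
    rw [Walk.isPath_def, Walk.support_concat, List.nodup_append]
    exact ⟨hp.support_nodup, List.nodup_singleton _, fun x hx z hz => by rw [List.mem_singleton] at hz; subst hz; exact fun h => hymem (h ▸ hx)⟩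
  obtain ⟨pp, _, huniq⟩ := hT.existsUnique_path r y
  obtain ⟨q, hq, hqlen⟩ := hc.exists_path_of_dist r y
  have e1 : p.concat h = pp := huniq _ hp'
  have e2 : q = pp := huniq _ hq
  have : (p.concat h).length = q.length := by rw [e1, e2]
  rw [Walk.length_concat, hlen, hqlen] at this
  omega

lemma fdaux_parent_unique {T : SimpleGraph V} (hT : T.IsTree) {r v a b : V}
    (ha : T.Adj v a) (hb : T.Adj v b)
    (hda : T.dist r a + 1 = T.dist r v) (hdb : T.dist r b + 1 = T.dist r v) : a = b := by
  have hc := hT.isConnected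
  obtain ⟨pa, hpa, hla⟩ := hc.exists_path_of_dist r a
  obtain ⟨pb, hpb, hlb⟩ := hc.exists_path_of_dist r b
  have hva : v ∉ pa.support := by
    intro hmem
    have := SimpleGraph.dist_le (pa.takeUntil v hmem)
    have hle := Walk.length_takeUntil_le pa hmem
    omega
  have hvb : v ∉ pb.support := by
    intro hmem
    have := SimpleGraph.dist_le (pb.takeUntil v hmem)
    have hle := Walk.length_takeUntil_le pb hmem
    omega
  have hqa : (pa.concat ha.symm).IsPath := by
    rw [Walk.isPath_def, Walk.support_concat, List.nodup_append]
    exact ⟨hpa.support_nodup, List.nodup_singleton _, fun x hx z hz => by rw [List.mem_singleton] at hz; subst hz; exact fun h => hva (h ▸ hx)⟩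
  have hqb : (pb.concat hb.symm).IsPath := by
    rw [Walk.isPath_def, Walk.support_concat, List.nodup_append]
    exact ⟨hpb.support_nodup, List.nodup_singleton _, fun x hx z hz => by rw [List.mem_singleton] at hz; subst hz; exact fun h => hvb (h ▸ hx)⟩
  obtain ⟨pp, _, huniq⟩ := hT.existsUnique_path r v
  have : pa.concat ha.symm = pb.concat hb.symm := by rw [huniq _ hqa, huniq _ hqb]
  obtain ⟨hv, -⟩ := Walk.concat_inj this
  exact hv
lemma fdaux_adj_dist {T : SimpleGraph V} (hT : T.IsTree) (r : V) {v z : V} (h : T.Adj v z) :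
    T.dist r z + 1 = T.dist r v ∨ T.dist r v + 1 = T.dist r z := by
  have hne := fdaux_adj_dist_ne hT r h
  have hc := hT.isConnected
  have h1 : T.dist r v ≤ T.dist r z + 1 := by
    have := hc.dist_triangle (u := r) (v := z) (w := v)
    have hzv : T.dist z v = 1 := SimpleGraph.dist_eq_one_iff_adj.mpr h.symm
    omega
  have h2 : T.dist r z ≤ T.dist r v + 1 := by
    have := hc.dist_triangle (u := r) (v := v) (w := z)
    have hvz : T.dist v z = 1 := SimpleGraph.dist_eq_one_iff_adj.mpr h
    omega
  omega


lemma fdaux_lower {V : Type*} [Fintype V] {T : SimpleGraph V} (hT : T.IsTree)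
    {D : Set V} {k : ℕ} (hk : 2 ≤ k) (hfair : ∀ v ∉ D, (T.neighborSet v ∩ D).ncard = k)
    {v0 : V} (hv0 : v0 ∉ D) : Fintype.card V + 1 ≤ 2 * D.ncard := by
  classical
  set n := Fintype.card V with hn
  set Dc : Finset V := (Dᶜ : Set V).toFinset with hDc
  set C : Finset (V × V) :=
    Finset.univ.filter (fun p : V × V => p.1 ∉ D ∧ p.2 ∈ T.neighborSet p.1 ∩ D) with hC
  have hfib : ∀ v ∈ Dc, (C.filter (fun p => p.1 = v)).card = k := by
    intro v hv
    have hvD : v ∉ D := by simpa [hDc] using hv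
    have himg : C.filter (fun p => p.1 = v)
        = (T.neighborSet v ∩ D).toFinset.image (fun u => (v, u)) := by
      ext p
      simp only [hC, Finset.mem_filter, Finset.mem_univ, true_and, Finset.mem_image,
        Set.mem_toFinset, Set.mem_inter_iff]
      constructor
      · rintro ⟨⟨h1, h2⟩, rfl⟩
        exact ⟨p.2, by simpa using h2, rfl⟩
      · rintro ⟨u, hu, rfl⟩
        exact ⟨⟨hvD, by simpa using hu⟩, rfl⟩
    rw [himg, Finset.card_image_of_injective _ (fun a b hab => by simpa using hab)]
    rw [← Set.ncard_eq_toFinset_card']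
    exact hfair v hvD
  have hcardC : C.card = Dc.card * k := by
    rw [Finset.card_eq_sum_card_fiberwise (f := fun p : V × V => p.1) (t := Dc)
      (fun p hp => by
        simp only [hC, Finset.mem_coe, Finset.mem_filter] at hp
        simpa [hDc] using hp.2.1)]
    rw [Finset.sum_congr rfl hfib, Finset.sum_const, smul_eq_mul]
  have hinj : ∀ p ∈ C, ∀ q ∈ C, (fun p : V × V => s(p.1, p.2)) p = (fun p : V × V => s(p.1, p.2)) q → p = q := by
    intro p hp q hq he
    simp only [hC, Finset.mem_filter, Set.mem_inter_iff] at hp hq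
    simp only [Sym2.eq, Sym2.rel_iff', Prod.mk.injEq, Prod.swap_prod_mk] at he
    rcases he with ⟨h1, h2⟩ | ⟨h1, h2⟩
    · exact Prod.ext h1 h2
    · exact absurd (h1 ▸ hq.2.2.2) hp.2.1
  have hmaps : ∀ p ∈ C, s(p.1, p.2) ∈ T.edgeFinset := by
    intro p hp
    simp only [hC, Finset.mem_filter, mem_neighborSet] at hp
    rw [mem_edgeFinset, mem_edgeSet]
    exact hp.2.2.1
  have hle : C.card ≤ T.edgeFinset.card := Finset.card_le_card_of_injOn _ hmaps hinj
  have hedge : T.edgeFinset.card + 1 = n := hT.card_edgeFinset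
  have hsum : D.ncard + (Dᶜ : Set V).ncard = n := by rw [Set.ncard_add_ncard_compl D]; exact Nat.card_eq_fintype_card
  have hDccard : Dc.card = (Dᶜ : Set V).ncard := (Set.ncard_eq_toFinset_card' _).symm
  have hpos : 0 < Dc.card := Finset.card_pos.mpr ⟨v0, by simpa [hDc] using hv0⟩
  have h2cc : 2 * Dc.card ≤ Dc.card * k := by calc 2 * Dc.card = Dc.card * 2 := Nat.mul_comm _ _
    _ ≤ Dc.card * k := Nat.mul_le_mul_left _ hk
  omega

lemma fdaux_upper (n : ℕ) {V : Type u} [Fintype V] (T : SimpleGraph V)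
    (hT : T.IsTree) (hcard : Fintype.card V = n) (hn : 2 ≤ n) :
    ∃ D : Set V, (∀ v ∉ D, (T.neighborSet v ∩ D).ncard = 1) ∧ 2 * D.ncard ≤ n := by
  classical
  have hc := hT.isConnected
  obtain ⟨r⟩ : Nonempty V := hc.nonempty
  obtain ⟨ℓ, -, hmax⟩ := Finset.exists_max_image Finset.univ (T.dist r) ⟨r, Finset.mem_univ r⟩
  have hmax' : ∀ v, T.dist r v ≤ T.dist r ℓ := fun v => hmax v (Finset.mem_univ v)
  rcases Nat.lt_or_ge (T.dist r ℓ) 2 with hdm2 | hdm2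
  · rcases Nat.eq_zero_or_pos (T.dist r ℓ) with h0 | h1
    · exfalso
      have hall : ∀ v : V, v = r := by
        intro v
        have h2 := hmax' v
        have : T.dist r v = 0 := by omega
        exact ((hc.dist_eq_zero_iff).mp this).symm
      have : Fintype.card V ≤ 1 :=
        Fintype.card_le_one_iff.mpr (fun a b => (hall a).trans (hall b).symm)
      omega
    · refine ⟨{r}, ?_, by rw [Set.ncard_singleton]; omega⟩
      intro v hv
      have hvr : v ≠ r := by simpa using hv
      have hd1 : T.dist r v = 1 := by
        have h1' := hmax' v
        have : T.dist r v ≠ 0 := fun h => hvr ((hc.dist_eq_zero_iff.mp h).symm)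
        omega
      have hadj : T.Adj v r := (SimpleGraph.dist_eq_one_iff_adj.mp hd1).symm
      rw [fdaux_filtered_inter (D := {r}) (b := r) (fun z _ hz => hz) hadj rfl]
      exact Set.ncard_singleton r
  · -- dist r ℓ ≥ 2
    have hℓr : ℓ ≠ r := by
      intro h; rw [h, SimpleGraph.dist_self] at hdm2; omega
    obtain ⟨uu, hℓu, hdu⟩ := fdaux_exists_parent hc hℓr
    have hur : uu ≠ r := by
      intro h; rw [h, SimpleGraph.dist_self] at hdu; omega
    obtain ⟨w, huw, hdw⟩ := fdaux_exists_parent hc hur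
    have hwu : w ≠ uu := by intro h; rw [h] at hdw; omega
    have hℓu' : ℓ ≠ uu := by intro h; rw [← h] at hdu; omega
    have hℓw : ℓ ≠ w := by intro h; rw [← h] at hdw; omega
    set S : Set V := {x | T.Adj uu x ∧ T.dist r x = T.dist r ℓ} with hS
    have hℓS : ℓ ∈ S := ⟨hℓu.symm, rfl⟩
    have hSpend : ∀ x ∈ S, ∀ z, T.Adj x z → z = uu := by
      rintro x ⟨hux, hdx⟩ z hz
      rcases fdaux_adj_dist hT r hz with h1 | h2
      · exact fdaux_parent_unique (r := r) hT hz hux.symm (by omega) (by omega)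
      · exfalso; have := hmax' z; omega
    have hupend : ∀ z, T.Adj uu z → z = w ∨ z ∈ S := by
      intro z hz
      rcases fdaux_adj_dist hT r hz with h1 | h2
      · exact Or.inl (fdaux_parent_unique hT hz huw h1 hdw)
      · exact Or.inr ⟨hz, by omega⟩
    have huS : uu ∉ S := fun h => T.irrefl h.1
    have hwS : w ∉ S := by rintro ⟨-, h⟩; omega
    have hℓpend : ∀ z, T.Adj ℓ z → z = uu := hSpend ℓ hℓS
    rcases Nat.lt_or_ge n 4 with hn4 | hn4
    · -- n = 3
      have hrul : r ≠ uu := hur.symm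
      have hcard3 : ({r, uu, ℓ} : Finset V).card = 3 := by
        rw [Finset.card_insert_of_notMem (by simp [hrul, hℓr.symm]),
          Finset.card_insert_of_notMem (by simp [hℓu'.symm]), Finset.card_singleton]
      have hn3 : n = 3 := by
        have hle : ({r, uu, ℓ} : Finset V).card ≤ Fintype.card V := by
          rw [← Finset.card_univ]; exact Finset.card_le_card (Finset.subset_univ _)
        omega
      have huniv : (Finset.univ : Finset V) = {r, uu, ℓ} := by
        refine (Finset.eq_of_subset_of_card_le (Finset.subset_univ _) ?_).symm
        rw [Finset.card_univ, hcard, hcard3, hn3]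
      -- w = r
      have hdm3 : T.dist r ℓ < 3 := by
        obtain ⟨p, hp, hlen⟩ := hc.exists_path_of_dist r ℓ
        have := hp.length_lt
        omega
      have hwr : w = r := by
        have : T.dist r w = 0 := by omega
        exact ((hc.dist_eq_zero_iff).mp this).symm
      refine ⟨{uu}, ?_, by rw [Set.ncard_singleton]; omega⟩
      intro v hv
      have hvu : v ≠ uu := by simpa using hv
      have hv3 : v = r ∨ v = uu ∨ v = ℓ := by
        have hm : v ∈ (Finset.univ : Finset V) := Finset.mem_univ v
        rw [huniv] at hm; simpa using hm
      have hadj : T.Adj v uu := by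
        rcases hv3 with rfl | rfl | rfl
        · exact (hwr ▸ huw).symm
        · exact absurd rfl hvu
        · exact hℓu
      rw [fdaux_filtered_inter (D := {uu}) (b := uu) (fun z _ hz => hz) hadj rfl]
      exact Set.ncard_singleton uu
    · -- n ≥ 4
      by_cases hSsing : ∀ x ∈ S, x = ℓ
      · -- S = {ℓ}; remove {ℓ, uu}
        have hunb : ∀ z, T.Adj uu z → z = w ∨ z = ℓ :=
          fun z hz => (hupend z hz).imp id (hSsing z)
        have hunb' : ∀ z, T.Adj uu z → z = ℓ ∨ z = w := fun z hz => (hunb z hz).symm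
        set s : Set V := ({ℓ, uu} : Set V)ᶜ with hs
        have hmem_s : ∀ v : V, v ≠ ℓ → v ≠ uu → v ∈ s := by
          intro v h1 h2
          simp [hs, h1, h2]
        have hwsmem : w ∈ s := hmem_s w hℓw.symm hwu
        have havoid : ∀ (x y : V) (p : T.Walk x y), p.IsPath → x ∈ s → y ∈ s →
            ∀ v ∈ p.support, v ∈ s := by
          intro x y p hp hx hy v hv
          simp only [hs, Set.mem_compl_iff, Set.mem_insert_iff, Set.mem_singleton_iff,
            not_or] at hx hy ⊢
          obtain ⟨hxℓ, hxu⟩ := hx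
          obtain ⟨hyℓ, hyu⟩ := hy
          constructor
          · rintro rfl
            exact fdaux_pendant_not_mem hℓpend p hp hxℓ hyℓ hv
          · rintro rfl
            exact fdaux_deg2_not_mem hℓpend hunb' p hp hxℓ hxu hyℓ hyu hv
        have hconn' : (T.induce s).Connected := by
          rw [connected_iff]
          refine ⟨?_, ⟨⟨w, hwsmem⟩⟩⟩
          rintro ⟨x, hx⟩ ⟨y, hy⟩
          obtain ⟨p⟩ := hc.preconnected x y
          exact fdaux_reachable_induce p.bypass
            (havoid x y p.bypass (p.bypass_isPath) hx hy) hx hy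
        have hT' : (T.induce s).IsTree := ⟨hconn', fdaux_isAcyclic_induce hT.IsAcyclic s⟩
        have hcompl : 2 + s.ncard = n := by
          have h2 := Set.ncard_add_ncard_compl ({ℓ, uu} : Set V)
          rw [Nat.card_eq_fintype_card, hcard, Set.ncard_pair hℓu'] at h2
          exact h2
        have hm2 : 2 ≤ s.ncard := by omega
        have hmlt : s.ncard < n := by omega
        have hcards : Fintype.card ↥s = s.ncard := by
          rw [← Nat.card_eq_fintype_card, Nat.card_coe_set_eq]
        obtain ⟨D', hfair', hbound'⟩ := fdaux_upper s.ncard (T.induce s) hT' hcards hm2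
        set D0 : Set V := Subtype.val '' D' with hD0
        have hD0card : D0.ncard = D'.ncard := Set.ncard_image_of_injective _ Subtype.val_injective
        have hD0s : ∀ v ∈ D0, v ∈ s := by
          rintro v ⟨x', -, rfl⟩; exact x'.2
        have hℓD0 : ℓ ∉ D0 := fun h => by
          have := hD0s ℓ h; simp [hs] at this
        have huD0 : uu ∉ D0 := fun h => by
          have := hD0s uu h; simp [hs] at this
        by_cases hwD : (⟨w, hwsmem⟩ : ↥s) ∈ D'
        · refine ⟨insert uu D0, ?_, ?_⟩
          · intro v hv
            have hvu : v ≠ uu := fun h => hv (h ▸ Set.mem_insert uu D0)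
            have hvD0 : v ∉ D0 := fun h => hv (Set.mem_insert_of_mem _ h)
            by_cases hvℓ : v = ℓ
            · subst hvℓ
              rw [fdaux_filtered_inter (fun z hz _ => hℓpend z hz) hℓu (Set.mem_insert uu D0)]
              exact Set.ncard_singleton uu
            · have hvs : v ∈ s := hmem_s v hvℓ hvu
              have hnadj : ¬ T.Adj v uu := by
                intro hadj
                rcases hunb v hadj.symm with rfl | rfl
                · exact hvD0 ((fdaux_mem_image_iff hwsmem).mpr hwD)
                · exact hvℓ rfl
              rw [fdaux_inter_insert hnadj]
              exact fdaux_count_transfer hfair' hvs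
                (fun hmem => hvD0 ((fdaux_mem_image_iff hvs).mpr hmem))
          · rw [Set.ncard_insert_of_notMem huD0 D0.toFinite, hD0card]
            omega
        · refine ⟨insert ℓ D0, ?_, ?_⟩
          · intro v hv
            have hvℓ : v ≠ ℓ := fun h => hv (h ▸ Set.mem_insert ℓ D0)
            have hvD0 : v ∉ D0 := fun h => hv (Set.mem_insert_of_mem _ h)
            by_cases hvu : v = uu
            · have hflt : ∀ z, T.Adj v z → z ∈ insert ℓ D0 → z = ℓ := by
                intro z hz hzD
                have hz' : T.Adj uu z := by rw [← hvu]; exact hz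
                rcases hunb z hz' with rfl | rfl
                · exfalso
                  rcases hzD with h | h
                  · exact hℓw h.symm
                  · exact hwD ((fdaux_mem_image_iff hwsmem).mp h)
                · rfl
              have hadjvl : T.Adj v ℓ := by rw [hvu]; exact hℓu.symm
              rw [fdaux_filtered_inter hflt hadjvl (Set.mem_insert ℓ D0)]
              exact Set.ncard_singleton ℓ
            · have hvs : v ∈ s := hmem_s v hvℓ hvu
              have hnadj : ¬ T.Adj v ℓ := fun hadj => hvu (hℓpend v hadj.symm)
              rw [fdaux_inter_insert hnadj]
              exact fdaux_count_transfer hfair' hvs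
                (fun hmem => hvD0 ((fdaux_mem_image_iff hvs).mpr hmem))
          · rw [Set.ncard_insert_of_notMem hℓD0 D0.toFinite, hD0card]
            omega
      · -- |S| ≥ 2 : remove S
        push_neg at hSsing
        obtain ⟨ℓ', hℓ'S, hℓ'ℓ⟩ := hSsing
        set s : Set V := Sᶜ with hs
        have husmem : uu ∈ s := huS
        have hwsmem : w ∈ s := hwS
        have havoid : ∀ (x y : V) (p : T.Walk x y), p.IsPath → x ∈ s → y ∈ s →
            ∀ v ∈ p.support, v ∈ s := by
          intro x y p hp hx hy v hv
          by_contra hvS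
          have hvS' : v ∈ S := not_not.mp hvS
          have hxv : x ≠ v := fun h => hx (h ▸ hvS')
          have hyv : y ≠ v := fun h => hy (h ▸ hvS')
          exact fdaux_pendant_not_mem (hSpend v hvS') p hp hxv hyv hv
        have hconn' : (T.induce s).Connected := by
          rw [connected_iff]
          refine ⟨?_, ⟨⟨uu, husmem⟩⟩⟩
          rintro ⟨x, hx⟩ ⟨y, hy⟩
          obtain ⟨p⟩ := hc.preconnected x y
          exact fdaux_reachable_induce p.bypass
            (havoid x y p.bypass (p.bypass_isPath) hx hy) hx hy
        have hT' : (T.induce s).IsTree := ⟨hconn', fdaux_isAcyclic_induce hT.IsAcyclic s⟩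
        have hS2 : 2 ≤ S.ncard := by
          have hsub : ({ℓ', ℓ} : Set V) ⊆ S := by
            rintro x (rfl | rfl)
            exacts [hℓ'S, hℓS]
          have := Set.ncard_le_ncard hsub S.toFinite
          rwa [Set.ncard_pair hℓ'ℓ] at this
        have hcompl : S.ncard + s.ncard = n := by
          have h2 := Set.ncard_add_ncard_compl S
          rwa [Nat.card_eq_fintype_card, hcard] at h2
        have hm2 : 2 ≤ s.ncard := by
          have hsub : ({uu, w} : Set V) ⊆ s := by
            rintro x (rfl | rfl)
            exacts [husmem, hwsmem]
          have := Set.ncard_le_ncard hsub s.toFinite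
          rwa [Set.ncard_pair hwu.symm] at this
        have hmlt : s.ncard < n := by omega
        have hcards : Fintype.card ↥s = s.ncard := by
          rw [← Nat.card_eq_fintype_card, Nat.card_coe_set_eq]
        obtain ⟨D', hfair', hbound'⟩ := fdaux_upper s.ncard (T.induce s) hT' hcards hm2
        set D0 : Set V := Subtype.val '' D' with hD0
        have hD0card : D0.ncard = D'.ncard := Set.ncard_image_of_injective _ Subtype.val_injective
        by_cases huD : (⟨uu, husmem⟩ : ↥s) ∈ D'
        · refine ⟨D0, ?_, ?_⟩
          · intro v hv
            by_cases hvS : v ∈ S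
            · have huD0 : uu ∈ D0 := (fdaux_mem_image_iff husmem).mpr huD
              rw [fdaux_filtered_inter (fun z hz _ => hSpend v hvS z hz) hvS.1.symm huD0]
              exact Set.ncard_singleton uu
            · have hvs : v ∈ s := hvS
              exact fdaux_count_transfer hfair' hvs
                (fun hmem => hv ((fdaux_mem_image_iff hvs).mpr hmem))
          · rw [hD0card]; omega
        · have hwD' : (⟨w, hwsmem⟩ : ↥s) ∈ D' := by
            have h1 := hfair' _ huD
            obtain ⟨z', hz'⟩ := fdaux_nonempty_of_ncard_one h1
            have hz'adj : T.Adj uu z'.val := hz'.1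
            rcases hupend z'.val hz'adj with h | h
            · have hzw : z' = ⟨w, hwsmem⟩ := Subtype.ext h
              exact hzw ▸ hz'.2
            · exact absurd h z'.2
          have huD0 : uu ∉ D0 := fun h => huD ((fdaux_mem_image_iff husmem).mp h)
          refine ⟨insert uu D0, ?_, ?_⟩
          · intro v hv
            have hvu : v ≠ uu := fun h => hv (h ▸ Set.mem_insert uu D0)
            have hvD0 : v ∉ D0 := fun h => hv (Set.mem_insert_of_mem _ h)
            by_cases hvS : v ∈ S
            · rw [fdaux_filtered_inter (fun z hz _ => hSpend v hvS z hz) hvS.1.symm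
                (Set.mem_insert uu D0)]
              exact Set.ncard_singleton uu
            · have hnadj : ¬ T.Adj v uu := by
                intro hadj
                rcases hupend v hadj.symm with rfl | h
                · exact hvD0 ((fdaux_mem_image_iff hwsmem).mpr hwD')
                · exact hvS h
              rw [fdaux_inter_insert hnadj]
              have hvs : v ∈ s := hvS
              exact fdaux_count_transfer hfair' hvs
                (fun hmem => hvD0 ((fdaux_mem_image_iff hvs).mpr hmem))
          · rw [Set.ncard_insert_of_notMem huD0 D0.toFinite, hD0card]
            omega
termination_by n
decreasing_by all_goals exact hmlt

/-- In a tree, every minimum fair dominating set is a 1-fair dominating set. -/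
theorem minimum_fdset_isKFDSet_one {V : Type*} [Fintype V] (T : SimpleGraph V)
    (hT : T.IsTree) (D : Set V) (hD : IsFDSet T D) (hmin : D.ncard = fd T) :
    IsKFDSet T 1 D := by
  classical
  by_cases hDuniv : D = Set.univ
  · subst hDuniv
    exact ⟨fun v hv => absurd (Set.mem_univ v) hv, fun v hv => absurd (Set.mem_univ v) hv⟩
  · obtain ⟨v0, hv0⟩ : ∃ v0, v0 ∉ D := by
      by_contra h
      push_neg at h
      exact hDuniv (Set.eq_univ_iff_forall.mpr h)
    obtain ⟨k, hk1, hdom, hcount⟩ := hD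
    rcases Nat.lt_or_ge k 2 with hk2 | hk2
    · have hk : k = 1 := by omega
      subst hk
      exact ⟨hdom, hcount⟩
    · exfalso
      have hlow := fdaux_lower hT hk2 hcount hv0
      have hn2 : 2 ≤ Fintype.card V := by
        obtain ⟨u1, hu1D, hu1adj⟩ := hdom v0 hv0
        have hne : u1 ≠ v0 := hu1adj.ne
        exact Fintype.one_lt_card_iff_nontrivial.mpr ⟨u1, v0, hne⟩
      obtain ⟨D1, hfair1, hbound1⟩ := fdaux_upper (Fintype.card V) T hT rfl hn2
      have hD1dom : ∀ v ∉ D1, ∃ u ∈ D1, T.Adj u v := by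
        intro v hv
        obtain ⟨u, hu⟩ := fdaux_nonempty_of_ncard_one (hfair1 v hv)
        refine ⟨u, hu.2, ?_⟩
        have : T.Adj v u := hu.1
        exact this.symm
      have hD1fd : IsFDSet T D1 := ⟨1, le_refl 1, hD1dom, hfair1⟩
      have hfdle : fd T ≤ D1.ncard := Nat.sInf_le ⟨D1, hD1fd, rfl⟩
      omega
end

section
/- If T is a tree on n ≥ 3 vertices with ℓ leaves, then fd(T) ≤ n − ℓ. -/
/-- If `T` is a tree on `n ≥ 3` vertices with `ℓ` leaves, then `fd(T) ≤ n - ℓ`. -/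
theorem fd_tree_le_card_sub_leaves {V : Type*} [Fintype V] (T : SimpleGraph V)
    (hT : T.IsTree) (n ℓ : ℕ) (hn : Fintype.card V = n) (h3 : 3 ≤ n)
    (hl : {v : V | (T.neighborSet v).ncard = 1}.ncard = ℓ) :
    fd T ≤ n - ℓ := by
  classical
  set L := {v : V | (T.neighborSet v).ncard = 1} with hL
  -- no two adjacent leaves
  have noadj : ∀ u v : V, T.neighborSet u = {v} → T.neighborSet v = {u} → False := by
    intro u v hu hv
    -- there is w ∉ {u, v}
    have hw : ∃ w : V, w ≠ u ∧ w ≠ v := by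
      by_contra h
      push_neg at h
      have hsub : (Finset.univ : Finset V) ⊆ {u, v} := by
        intro x _
        by_cases hx : x = u
        · simp [hx]
        · simp [h x hx]
      have hc := Finset.card_le_card hsub
      have h2 : ({u, v} : Finset V).card ≤ 2 := (Finset.card_insert_le u {v}).trans (by simp)
      rw [Finset.card_univ, hn] at hc
      omega
    obtain ⟨w, hwu, hwv⟩ := hw
    have claim : ∀ {a x : V} (p : T.Walk a x), (a = u ∨ a = v) → (x = u ∨ x = v) := by
      intro a x p
      induction p with
      | nil => exact id
      | @cons a b x h p ih =>
        intro ha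
        apply ih
        rcases ha with rfl | rfl
        · have : b ∈ T.neighborSet a := h
          rw [hu] at this
          right; exact this
        · have : b ∈ T.neighborSet a := h
          rw [hv] at this
          left; exact this
    have hreach : T.Reachable u w := hT.isConnected.preconnected u w
    obtain ⟨p⟩ := hreach
    rcases claim p (Or.inl rfl) with h1 | h2
    · exact hwu h1
    · exact hwv h2
  have key : IsKFDSet T 1 Lᶜ := by
    constructor
    · intro v hv
      have hv' : (T.neighborSet v).ncard = 1 := by
        simpa [hL] using hv
      obtain ⟨u, hu⟩ := Set.ncard_eq_one.mp hv'
      have hadj : T.Adj v u := by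
        have : u ∈ T.neighborSet v := by rw [hu]; rfl
        exact this
      refine ⟨u, ?_, hadj.symm⟩
      intro huL
      have hu' : (T.neighborSet u).ncard = 1 := huL
      obtain ⟨w, hw⟩ := Set.ncard_eq_one.mp hu'
      have hvw : v ∈ T.neighborSet u := hadj.symm
      rw [hw] at hvw
      subst hvw
      exact noadj u v hw hu
    · intro v hv
      have hv' : (T.neighborSet v).ncard = 1 := by
        simpa [hL] using hv
      obtain ⟨u, hu⟩ := Set.ncard_eq_one.mp hv'
      have hadj : T.Adj v u := by
        have : u ∈ T.neighborSet v := by rw [hu]; rfl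
        exact this
      have huD : u ∈ Lᶜ := by
        intro huL
        have hu' : (T.neighborSet u).ncard = 1 := huL
        obtain ⟨w, hw⟩ := Set.ncard_eq_one.mp hu'
        have hvw : v ∈ T.neighborSet u := hadj.symm
        rw [hw] at hvw
        subst hvw
        exact noadj u v hw hu
      rw [hu, Set.inter_eq_self_of_subset_left (Set.singleton_subset_iff.mpr huD)]
      simp
  have hmem : (Lᶜ).ncard ∈ {m | ∃ D : Set V, IsFDSet T D ∧ D.ncard = m} :=
    ⟨Lᶜ, ⟨1, le_refl 1, key⟩, rfl⟩
  have hle : fd T ≤ (Lᶜ).ncard := Nat.sInf_le hmem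
  have hcompl : L.ncard + (Lᶜ).ncard = Fintype.card V := by
    rw [Set.ncard_add_ncard_compl L, Nat.card_eq_fintype_card]
  rw [hl, hn] at hcompl
  omega
end
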